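/- arXiv:2407.00240 — 6 statements merged into one kernel-verified Lean document; each statement's English description precedes it below -/
import Mathlib

section
/- Suppose f, g : ℝ → ℝ are infinitely differentiable and there exist constants C > 0 and N > 0 with |f⁽ᵏ⁾(0)| ≤ C·Nᵏ and |g⁽ᵏ⁾(0)| ≤ C·Nᵏ for all k ∈ ℕ. Then the family indexed by (k,l) ∈ ℕ × ℕ of terms (f⁽ᵏ⁾(0)·g⁽ˡ⁾(0)/(k!·l!))·m(k,l), where m(k,l) := ∫_{ℝ²} xᵏ·wˡ·p(x,w) dx dw, is (absolutely) summable. -/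
open MeasureTheory Real

/-- Centered bivariate Gaussian density with covariance entries `σii, σjj, σij`. -/
noncomputable def gaussPDF2 (σii σjj σij : ℝ) (x w : ℝ) : ℝ :=
  (1 / (2 * π * Real.sqrt (σii * σjj - σij ^ 2))) *
    Real.exp (-(σjj * x ^ 2 - 2 * σij * x * w + σii * w ^ 2) / (2 * (σii * σjj - σij ^ 2)))

/-- Centered univariate Gaussian density with variance `σ`. -/
noncomputable def gaussPDF1 (σ x : ℝ) : ℝ :=
  (1 / Real.sqrt (2 * π * σ)) * Real.exp (-x ^ 2 / (2 * σ))

/-- Transformed mean `ν(f)`. -/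
noncomputable def transMean (σ : ℝ) (f : ℝ → ℝ) : ℝ := ∫ x : ℝ, f x * gaussPDF1 σ x

/-- Transformed covariance `τ(f, g)`. -/
noncomputable def transCov (σii σjj σij : ℝ) (f g : ℝ → ℝ) : ℝ :=
  (∫ q : ℝ × ℝ, f q.1 * g q.2 * gaussPDF2 σii σjj σij q.1 q.2) -
    transMean σii f * transMean σjj g

/-- `t^m ≤ m! * exp t` for `t ≥ 0`. -/
lemma pow_le_factorial_mul_exp {t : ℝ} (ht : 0 ≤ t) (m : ℕ) :
    t ^ m ≤ (m.factorial : ℝ) * Real.exp t := by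
  have h1 : t ^ m / (m.factorial : ℝ) ≤ Real.exp t := by
    calc t ^ m / (m.factorial : ℝ)
        ≤ ∑ i ∈ Finset.range (m + 1), t ^ i / (i.factorial : ℝ) := by
          exact Finset.single_le_sum (f := fun i => t ^ i / (i.factorial : ℝ))
            (fun i _ => by positivity) (Finset.self_mem_range_succ m)
      _ ≤ Real.exp t := Real.sum_le_exp_of_nonneg ht _
  have hm : (0:ℝ) < (m.factorial : ℝ) := by exact_mod_cast m.factorial_pos
  calc t ^ m = t ^ m / (m.factorial : ℝ) * (m.factorial : ℝ) := by field_simp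
    _ ≤ Real.exp t * (m.factorial : ℝ) := mul_le_mul_of_nonneg_right h1 hm.le
    _ = (m.factorial : ℝ) * Real.exp t := mul_comm _ _

/-- Key pointwise bound: `|x|^k ≤ (1 + b^⌈k/2⌉ ⌈k/2⌉!) * exp (x^2 / b)` for `b > 0`. -/
lemma abs_pow_le_exp_sq {b : ℝ} (hb : 0 < b) (k : ℕ) (x : ℝ) :
    |x| ^ k ≤ (1 + b ^ ((k + 1) / 2) * (((k + 1) / 2).factorial : ℝ)) *
      Real.exp (x ^ 2 / b) := by
  set m := (k + 1) / 2 with hm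
  have hx2 : 0 ≤ x ^ 2 / b := div_nonneg (sq_nonneg x) hb.le
  have hexp1 : (1 : ℝ) ≤ Real.exp (x ^ 2 / b) := Real.one_le_exp hx2
  have hfm : (0:ℝ) < (m.factorial : ℝ) := by exact_mod_cast m.factorial_pos
  have hcoef : (0:ℝ) ≤ b ^ m * (m.factorial : ℝ) := by positivity
  rcases le_or_gt (|x|) 1 with h | h
  · calc |x| ^ k ≤ 1 ^ k := pow_le_pow_left₀ (abs_nonneg x) h k
      _ = 1 := one_pow k
      _ ≤ (1 + b ^ m * (m.factorial : ℝ)) * 1 := by nlinarith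
      _ ≤ _ := by
          apply mul_le_mul_of_nonneg_left hexp1; linarith
  · have hk2m : k ≤ 2 * m := by omega
    have h1 : |x| ^ k ≤ |x| ^ (2 * m) := pow_le_pow_right₀ h.le hk2m
    have h2 : |x| ^ (2 * m) = (x ^ 2) ^ m := by rw [pow_mul, sq_abs]
    have h3 : (x ^ 2) ^ m = b ^ m * (x ^ 2 / b) ^ m := by
      rw [← mul_pow]; congr 1; field_simp
    calc |x| ^ k ≤ (x ^ 2) ^ m := by rw [← h2]; exact h1
      _ = b ^ m * (x ^ 2 / b) ^ m := h3
      _ ≤ b ^ m * ((m.factorial : ℝ) * Real.exp (x ^ 2 / b)) :=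
          mul_le_mul_of_nonneg_left (pow_le_factorial_mul_exp hx2 m) (by positivity)
      _ = (b ^ m * (m.factorial : ℝ)) * Real.exp (x ^ 2 / b) := by ring
      _ ≤ _ := by
          apply mul_le_mul_of_nonneg_right _ (Real.exp_nonneg _); linarith

/-- Summability of `r^k / ⌊k/2⌋!`. -/
lemma summable_pow_div_half_factorial {r : ℝ} (hr : 0 ≤ r) :
    Summable (fun k : ℕ => r ^ k / ((k / 2).factorial : ℝ)) := by
  set R : ℝ := max r 1 with hR
  have hR1 : (1 : ℝ) ≤ R := le_max_right _ _
  have hrR : r ≤ R := le_max_left _ _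
  have hR0 : (0:ℝ) < R := lt_of_lt_of_le one_pos hR1
  have h2R : (1:ℝ) < 2 * R := by nlinarith
  have hS : Summable (fun m : ℕ => ((2 * R) ^ 2) ^ m / (m.factorial : ℝ)) :=
    Real.summable_pow_div_factorial _
  have hev : ∀ᶠ m in Filter.atTop,
      ((2 * R) ^ 2) ^ m / (m.factorial : ℝ) < 1 / (2 * R) :=
    hS.tendsto_atTop_zero.eventually_lt_const (by positivity)
  rw [Filter.eventually_atTop] at hev
  obtain ⟨M, hM⟩ := hev
  apply summable_of_isBigO_nat (g := fun k : ℕ => (1 / 2 : ℝ) ^ k)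
    (summable_geometric_of_lt_one (by norm_num) (by norm_num))
  rw [Asymptotics.isBigO_iff]
  refine ⟨1, ?_⟩
  rw [Filter.eventually_atTop]
  refine ⟨2 * M, fun k hk => ?_⟩
  set m := k / 2 with hm
  have hmM : M ≤ m := by omega
  have hfac := hM m hmM
  have hfacpos : (0:ℝ) < (m.factorial : ℝ) := by exact_mod_cast m.factorial_pos
  have hkey : (2 * R) ^ k ≤ (m.factorial : ℝ) := by
    have h1 : (2 * R) ^ k ≤ (2 * R) ^ (2 * m + 1) :=
      pow_le_pow_right₀ h2R.le (by omega)
    have h2 : (2 * R) ^ (2 * m + 1) = (2 * R) * ((2 * R) ^ 2) ^ m := by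
      rw [← pow_mul]; ring
    have h3 : (2 * R) * ((2 * R) ^ 2) ^ m ≤ (m.factorial : ℝ) := by
      rw [div_lt_div_iff₀ hfacpos (by positivity : (0:ℝ) < 2 * R)] at hfac
      nlinarith
    calc (2 * R) ^ k ≤ (2 * R) * ((2 * R) ^ 2) ^ m := by rw [← h2]; exact h1
      _ ≤ (m.factorial : ℝ) := h3
  have hterm : r ^ k / ((m.factorial : ℝ)) ≤ (1 / 2 : ℝ) ^ k := by
    rw [div_le_iff₀ hfacpos]
    calc r ^ k ≤ R ^ k := pow_le_pow_left₀ hr hrR k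
      _ = (1 / 2 : ℝ) ^ k * (2 * R) ^ k := by
          rw [← mul_pow]; congr 1; ring
      _ ≤ (1 / 2 : ℝ) ^ k * (m.factorial : ℝ) :=
          mul_le_mul_of_nonneg_left hkey (by positivity)
  have hnn : (0:ℝ) ≤ r ^ k / ((m.factorial : ℝ)) := by positivity
  simpa [abs_of_nonneg hnn, abs_of_nonneg hr,
    abs_of_nonneg (by positivity : (0:ℝ) ≤ (1/2:ℝ)^k)] using hterm

set_option maxHeartbeats 1000000 in
theorem mixed_moment_series_summable
    (σii σjj σij : ℝ) (hii : 0 < σii) (hjj : 0 < σjj)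
    (hd : 0 < σii * σjj - σij ^ 2)
    (f g : ℝ → ℝ) (hf : ContDiff ℝ (⊤ : ℕ∞) f) (hg : ContDiff ℝ (⊤ : ℕ∞) g)
    (C N : ℝ) (hC : 0 < C) (hN : 0 < N)
    (hfb : ∀ k : ℕ, |iteratedDeriv k f 0| ≤ C * N ^ k)
    (hgb : ∀ k : ℕ, |iteratedDeriv k g 0| ≤ C * N ^ k) :
    Summable (fun kl : ℕ × ℕ =>
      iteratedDeriv kl.1 f 0 * iteratedDeriv kl.2 g 0 /
          ((kl.1.factorial : ℝ) * (kl.2.factorial : ℝ)) *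
        ∫ q : ℝ × ℝ, q.1 ^ kl.1 * q.2 ^ kl.2 * gaussPDF2 σii σjj σij q.1 q.2) := by
  have hπ := Real.pi_pos
  set s : ℝ := σii + σjj with hss
  have hs : 0 < s := by positivity
  set c : ℝ := 1 / (2 * π * Real.sqrt (σii * σjj - σij ^ 2)) with hcc
  have hsd : 0 < Real.sqrt (σii * σjj - σij ^ 2) := Real.sqrt_pos.mpr hd
  have hc : 0 < c := by rw [hcc]; positivity
  -- the one-dimensional dominating function
  have hbpos : (0:ℝ) < 1 / (4 * s) := by positivity
  have hint1 : Integrable (fun x : ℝ => Real.exp (-(1 / (4 * s)) * x ^ 2)) :=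
    integrable_exp_neg_mul_sq hbpos
  set I : ℝ := ∫ x : ℝ, Real.exp (-(1 / (4 * s)) * x ^ 2) with hII
  have hI0 : 0 ≤ I := integral_nonneg fun x => (Real.exp_nonneg _)
  set u : ℕ → ℝ := fun k => 1 + (4 * s) ^ ((k + 1) / 2) * (((k + 1) / 2).factorial : ℝ)
    with hu
  have hu1 : ∀ k, (1:ℝ) ≤ u k := by
    intro k
    have : (0:ℝ) ≤ (4 * s) ^ ((k + 1) / 2) * (((k + 1) / 2).factorial : ℝ) := by
      positivity
    simp only [hu]; linarith
  have hu0 : ∀ k, (0:ℝ) ≤ u k := fun k => le_trans zero_le_one (hu1 k)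
  -- pointwise bound on the gaussian density
  have hpdf : ∀ x w : ℝ, gaussPDF2 σii σjj σij x w ≤
      c * (Real.exp (-x ^ 2 / (2 * s)) * Real.exp (-w ^ 2 / (2 * s))) := by
    intro x w
    unfold gaussPDF2
    rw [← hcc, ← Real.exp_add]
    apply mul_le_mul_of_nonneg_left _ hc.le
    apply Real.exp_le_exp.mpr
    have hQ : (x ^ 2 + w ^ 2) / (2 * s) ≤
        (σjj * x ^ 2 - 2 * σij * x * w + σii * w ^ 2) / (2 * (σii * σjj - σij ^ 2)) := by
      rw [div_le_div_iff₀ (by positivity) (by positivity), hss]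
      nlinarith [sq_nonneg (σjj * x - σij * w), sq_nonneg (σij * x - σii * w)]
    calc -(σjj * x ^ 2 - 2 * σij * x * w + σii * w ^ 2) / (2 * (σii * σjj - σij ^ 2))
        = -((σjj * x ^ 2 - 2 * σij * x * w + σii * w ^ 2) / (2 * (σii * σjj - σij ^ 2))) := by
          ring
      _ ≤ -((x ^ 2 + w ^ 2) / (2 * s)) := neg_le_neg hQ
      _ = -x ^ 2 / (2 * s) + -w ^ 2 / (2 * s) := by ring
  -- bound on |x|^k * exp(-x²/(2s))
  have hone : ∀ (k : ℕ) (x : ℝ), |x| ^ k * Real.exp (-x ^ 2 / (2 * s)) ≤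
      u k * Real.exp (-(1 / (4 * s)) * x ^ 2) := by
    intro k x
    have h4s : (0:ℝ) < 4 * s := by positivity
    have e1 : Real.exp (-x ^ 2 / (2 * s)) =
        Real.exp (-(1 / (4 * s)) * x ^ 2) * Real.exp (-(1 / (4 * s)) * x ^ 2) := by
      rw [← Real.exp_add]; congr 1; field_simp; ring
    have e2 : |x| ^ k * Real.exp (-(1 / (4 * s)) * x ^ 2) ≤ u k := by
      calc |x| ^ k * Real.exp (-(1 / (4 * s)) * x ^ 2)
          ≤ (u k * Real.exp (x ^ 2 / (4 * s))) * Real.exp (-(1 / (4 * s)) * x ^ 2) :=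
            mul_le_mul_of_nonneg_right (abs_pow_le_exp_sq h4s k x) (Real.exp_nonneg _)
        _ = u k * Real.exp (x ^ 2 / (4 * s) + -(1 / (4 * s)) * x ^ 2) := by
            rw [Real.exp_add]; ring
        _ = u k := by
            rw [show x ^ 2 / (4 * s) + -(1 / (4 * s)) * x ^ 2 = 0 by field_simp; ring]
            simp
    calc |x| ^ k * Real.exp (-x ^ 2 / (2 * s))
        = (|x| ^ k * Real.exp (-(1 / (4 * s)) * x ^ 2)) *
            Real.exp (-(1 / (4 * s)) * x ^ 2) := by rw [e1]; ring
      _ ≤ u k * Real.exp (-(1 / (4 * s)) * x ^ 2) :=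
          mul_le_mul_of_nonneg_right e2 (Real.exp_nonneg _)
  -- nonnegativity of the density
  have hp0 : ∀ x w : ℝ, 0 ≤ gaussPDF2 σii σjj σij x w := by
    intro x w
    unfold gaussPDF2
    positivity
  -- the integral bound
  have hintbound : ∀ k l : ℕ,
      |∫ q : ℝ × ℝ, q.1 ^ k * q.2 ^ l * gaussPDF2 σii σjj σij q.1 q.2| ≤
        u k * u l * (c * (I * I)) := by
    intro k l
    have hGint : Integrable (fun q : ℝ × ℝ => (c * (u k * u l)) *
        (Real.exp (-(1 / (4 * s)) * q.1 ^ 2) * Real.exp (-(1 / (4 * s)) * q.2 ^ 2))) := by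
      apply Integrable.const_mul
      rw [Measure.volume_eq_prod]
      exact hint1.mul_prod hint1
    have hbound : ∀ q : ℝ × ℝ,
        ‖q.1 ^ k * q.2 ^ l * gaussPDF2 σii σjj σij q.1 q.2‖ ≤ (c * (u k * u l)) *
          (Real.exp (-(1 / (4 * s)) * q.1 ^ 2) * Real.exp (-(1 / (4 * s)) * q.2 ^ 2)) := by
      intro ⟨x, w⟩
      simp only [Real.norm_eq_abs]
      rw [abs_mul, abs_mul, abs_pow, abs_pow, abs_of_nonneg (hp0 x w)]
      calc |x| ^ k * |w| ^ l * gaussPDF2 σii σjj σij x w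
          ≤ |x| ^ k * |w| ^ l *
            (c * (Real.exp (-x ^ 2 / (2 * s)) * Real.exp (-w ^ 2 / (2 * s)))) :=
            mul_le_mul_of_nonneg_left (hpdf x w) (by positivity)
        _ = c * ((|x| ^ k * Real.exp (-x ^ 2 / (2 * s))) *
            (|w| ^ l * Real.exp (-w ^ 2 / (2 * s)))) := by ring
        _ ≤ c * ((u k * Real.exp (-(1 / (4 * s)) * x ^ 2)) *
            (u l * Real.exp (-(1 / (4 * s)) * w ^ 2))) := by
            apply mul_le_mul_of_nonneg_left _ hc.le
            apply mul_le_mul (hone k x) (hone l w) (by positivity)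
            positivity
        _ = (c * (u k * u l)) *
            (Real.exp (-(1 / (4 * s)) * x ^ 2) * Real.exp (-(1 / (4 * s)) * w ^ 2)) := by
            ring
    calc |∫ q : ℝ × ℝ, q.1 ^ k * q.2 ^ l * gaussPDF2 σii σjj σij q.1 q.2|
        ≤ ∫ q : ℝ × ℝ, ‖q.1 ^ k * q.2 ^ l * gaussPDF2 σii σjj σij q.1 q.2‖ := by
          simpa using norm_integral_le_integral_norm
            (fun q : ℝ × ℝ => q.1 ^ k * q.2 ^ l * gaussPDF2 σii σjj σij q.1 q.2)
      _ ≤ ∫ q : ℝ × ℝ, (c * (u k * u l)) *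
            (Real.exp (-(1 / (4 * s)) * q.1 ^ 2) * Real.exp (-(1 / (4 * s)) * q.2 ^ 2)) :=
          integral_mono_of_nonneg (Filter.Eventually.of_forall fun q => norm_nonneg _)
            hGint (Filter.Eventually.of_forall hbound)
      _ = u k * u l * (c * (I * I)) := by
          rw [MeasureTheory.integral_const_mul, Measure.volume_eq_prod,
            integral_prod_mul (fun x : ℝ => Real.exp (-(1 / (4 * s)) * x ^ 2))
              (fun x : ℝ => Real.exp (-(1 / (4 * s)) * x ^ 2))]
          rw [hII]; ring
  -- the summable majorant
  set a : ℕ → ℝ := fun k => C * N ^ k * u k / (k.factorial : ℝ) with ha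
  have ha0 : ∀ k, 0 ≤ a k := by
    intro k
    exact div_nonneg (mul_nonneg (by positivity) (hu0 k)) (Nat.cast_nonneg _)
  set T : ℝ := max (4 * s) 1 with hT
  have hT1 : (1:ℝ) ≤ T := le_max_right _ _
  have hT4s : 4 * s ≤ T := le_max_left _ _
  have hT0 : (0:ℝ) < T := lt_of_lt_of_le one_pos hT1
  have ha_le : ∀ k, a k ≤ (2 * C) * ((N * T) ^ k / ((k / 2).factorial : ℝ)) := by
    intro k
    set m := (k + 1) / 2 with hm
    set qq := k / 2 with hqq
    have hmq : m + qq = k := by omega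
    have hfq : (0:ℝ) < (qq.factorial : ℝ) := by exact_mod_cast qq.factorial_pos
    have hfk : (0:ℝ) < (k.factorial : ℝ) := by exact_mod_cast k.factorial_pos
    have hA : (qq.factorial : ℝ) ≤ (k.factorial : ℝ) := by
      exact_mod_cast Nat.factorial_le (by omega)
    have hB : (m.factorial : ℝ) * (qq.factorial : ℝ) ≤ (k.factorial : ℝ) := by
      have := Nat.le_of_dvd k.factorial_pos
        (hmq ▸ Nat.factorial_mul_factorial_dvd_factorial_add m qq)
      exact_mod_cast this
    have hTm : (4 * s) ^ m ≤ T ^ k := by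
      calc (4 * s) ^ m ≤ T ^ m := pow_le_pow_left₀ (by positivity) hT4s m
        _ ≤ T ^ k := pow_le_pow_right₀ hT1 (by omega)
    have hTk : (1:ℝ) ≤ T ^ k := one_le_pow₀ hT1
    simp only [ha, hu]
    rw [← hm, ← mul_div_assoc, div_le_div_iff₀ hfk hfq, mul_pow N T k]
    have hNk : (0:ℝ) < N ^ k := pow_pos hN k
    have e1 : C * N ^ k * (qq.factorial : ℝ) ≤ C * N ^ k * (T ^ k * (k.factorial : ℝ)) := by
      apply mul_le_mul_of_nonneg_left _ (by positivity)
      nlinarith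
    have e2 : C * N ^ k * ((4 * s) ^ m * ((m.factorial : ℝ) * (qq.factorial : ℝ))) ≤
        C * N ^ k * (T ^ k * (k.factorial : ℝ)) := by
      apply mul_le_mul_of_nonneg_left _ (by positivity)
      apply mul_le_mul hTm hB (by positivity) (by positivity)
    nlinarith [e1, e2]
  have hsum_a : Summable a := by
    have h1 : Summable (fun k : ℕ => (2 * C) * ((N * T) ^ k / ((k / 2).factorial : ℝ))) :=
      (summable_pow_div_half_factorial (by positivity)).mul_left (2 * C)
    exact Summable.of_nonneg_of_le ha0 ha_le h1
  -- assemble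
  have hmaj : Summable (fun kl : ℕ × ℕ => a kl.1 * ((c * (I * I)) * a kl.2)) := by
    apply Summable.mul_of_nonneg hsum_a (hsum_a.mul_left (c * (I * I))) ha0
    intro l
    exact mul_nonneg (by positivity) (ha0 l)
  have key : ∀ (A B U V K P Q : ℝ), P ≠ 0 → Q ≠ 0 →
      (A * B / (P * Q)) * (U * V * K) = (A * U / P) * (K * (B * V / Q)) := by
    intros A B U V K P Q hP hQ
    field_simp
  apply Summable.of_norm_bounded hmaj
  intro ⟨k, l⟩
  simp only [Real.norm_eq_abs]
  have hfk : (0:ℝ) < (k.factorial : ℝ) := by exact_mod_cast k.factorial_pos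
  have hfl : (0:ℝ) < (l.factorial : ℝ) := by exact_mod_cast l.factorial_pos
  rw [abs_mul, abs_div, abs_mul, abs_mul, abs_of_nonneg hfk.le, abs_of_nonneg hfl.le]
  have hco : |iteratedDeriv k f 0| * |iteratedDeriv l g 0| /
      ((k.factorial : ℝ) * (l.factorial : ℝ)) ≤
      (C * N ^ k) * (C * N ^ l) / ((k.factorial : ℝ) * (l.factorial : ℝ)) := by
    exact div_le_div₀ (by positivity)
      (mul_le_mul (hfb k) (hgb l) (abs_nonneg _) (by positivity))
      (by positivity) (le_refl _)
  calc |iteratedDeriv k f 0| * |iteratedDeriv l g 0| /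
        ((k.factorial : ℝ) * (l.factorial : ℝ)) *
        |∫ q : ℝ × ℝ, q.1 ^ k * q.2 ^ l * gaussPDF2 σii σjj σij q.1 q.2|
      ≤ ((C * N ^ k) * (C * N ^ l) / ((k.factorial : ℝ) * (l.factorial : ℝ))) *
        (u k * u l * (c * (I * I))) := by
        apply mul_le_mul hco (hintbound k l) (abs_nonneg _) (by positivity)
    _ = a k * ((c * (I * I)) * a l) := by
        simp only [ha]
        exact key _ _ _ _ _ _ _ hfk.ne' hfl.ne'
  done
end

section
/- For all p, q ∈ ℕ: if p + q is odd then ∫_{ℝ²} xᵖ·w^q·p(x,w) dx dw = 0; and if p + q is even then ∫_{ℝ²} xᵖ·w^q·p(x,w) dx dw = Σ_k (p−k−1)!!·C(p,k)·C(q,k)·k!·(q−k−1)!!·σii^((p−k)/2)·σij^k·σjj^((q−k)/2), where the sum runs over all k with 0 ≤ k ≤ min(p,q) and k ≡ p (mod 2), C(n,k) denotes the binomial coefficient, and (2m−1)!! := (2m)!/(2^m·m!) with (−1)!! := 1. -/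
open MeasureTheory Real

/-- The odd double factorial: `oddDoubleFactorial m = (2m-1)!! = (2m)!/(2^m m!)`,
with the convention `(-1)!! = oddDoubleFactorial 0 = 1`. -/
noncomputable def oddDoubleFactorial (m : ℕ) : ℝ :=
  (Nat.factorial (2 * m) : ℝ) / ((2 : ℝ) ^ m * (Nat.factorial m : ℝ))

/-!
Integrating by parts in `x` and in `w` against the density (Stein's identity) gives two linear
relations between the moments `M p q = ∫ xᵖ wᵠ p(x, w)`; eliminating one mixed moment yields
`M (p + 1) q = p σii M (p - 1) q + q σij M p (q - 1)`, and symmetrically in `w`. With `M 0 0 = 1`,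
obtained by factoring the density into the `N(0, σii)` density of `x` and the
`N(σij x / σii, d / σii)` density of `w`, these recursions determine every moment.

The `k`-th Wick term counts the pairings of `p` factors `x` and `q` factors `w` with `k` mixed
pairs, each pair weighted by `σii`, `σij` or `σjj`. Pairing the first `x` either with one of the
other `p` factors `x` or with one of the `q` factors `w` shows that the Wick sum obeys the same
recursions.
-/

open Finset ProbabilityTheory

theorem Nat.choose_succ_mul_sub (n k : ℕ) :
    n.choose (k + 1) * (n - (k + 1)) = n * (n - 1).choose (k + 1) := by
  rcases n with _ | n
  · simp
  · simpa [mul_comm] using (Nat.choose_mul_succ_eq n (k + 1)).symm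

theorem Nat.mul_sub_one_choose (n k : ℕ) :
    n * (n - 1).choose k = n.choose (k + 1) * (k + 1) := by
  rcases n with _ | n
  · simp
  · simpa using Nat.add_one_mul_choose_eq n k

theorem HasDerivAt.hasLineDerivAt_fst {𝕜 F E : Type*} [NontriviallyNormedField 𝕜] [AddCommGroup F]
    [Module 𝕜 F] [NormedAddCommGroup E] [NormedSpace 𝕜 E] {f : 𝕜 × F → E} {f' : E} {z : 𝕜 × F}
    (h : HasDerivAt (fun x => f (x, z.2)) f' z.1) : HasLineDerivAt 𝕜 f f' z (1, 0) := by
  obtain ⟨x, w⟩ := z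
  simpa [HasLineDerivAt, add_comm] using HasDerivAt.comp_const_add x 0 (by simpa using h)

theorem oddDoubleFactorial_zero : oddDoubleFactorial 0 = 1 := by
  simp [oddDoubleFactorial]

theorem oddDoubleFactorial_succ (m : ℕ) :
    oddDoubleFactorial (m + 1) = (2 * m + 1) * oddDoubleFactorial m := by
  rw [oddDoubleFactorial, oddDoubleFactorial, show 2 * (m + 1) = 2 * m + 1 + 1 by ring,
    Nat.factorial_succ, Nat.factorial_succ, Nat.factorial_succ]
  push_cast
  field_simp
  ring

noncomputable def centralGaussianMoment (σ : ℝ) (n : ℕ) : ℝ :=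
  if Even n then oddDoubleFactorial (n / 2) * σ ^ (n / 2) else 0

theorem centralGaussianMoment_zero (σ : ℝ) : centralGaussianMoment σ 0 = 1 := by
  simp [centralGaussianMoment, oddDoubleFactorial_zero]

theorem centralGaussianMoment_succ (σ : ℝ) (n : ℕ) :
    centralGaussianMoment σ (n + 1) = n * σ * centralGaussianMoment σ (n - 1) := by
  rcases Nat.even_or_odd' n with ⟨m, rfl | rfl⟩
  · rcases m with _ | m
    · simp [centralGaussianMoment]
    · have h1 : ¬Even (2 * (m + 1) + 1) := by simp
      have h2 : ¬Even (2 * (m + 1) - 1) := by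
        rw [show 2 * (m + 1) - 1 = 2 * m + 1 by omega]; simp
      simp [centralGaussianMoment, h1, h2]
  · rw [centralGaussianMoment, centralGaussianMoment, if_pos ⟨m + 1, by ring⟩,
      if_pos ⟨m, by omega⟩, show (2 * m + 1 + 1) / 2 = m + 1 by omega,
      show (2 * m + 1 - 1) / 2 = m by omega, oddDoubleFactorial_succ]
    push_cast
    ring

theorem centralGaussianMoment_eq_zero_of_odd (σ : ℝ) {n : ℕ} (hn : Odd n) :
    centralGaussianMoment σ n = 0 := by
  simp [centralGaussianMoment, Nat.not_even_iff_odd.mpr hn]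

section Wick

variable (σii σjj σij : ℝ)

noncomputable def wickTerm (p q k : ℕ) : ℝ :=
  p.choose k * q.choose k * k.factorial * σij ^ k *
    centralGaussianMoment σii (p - k) * centralGaussianMoment σjj (q - k)

noncomputable def wickSum (p q : ℕ) : ℝ :=
  ∑ k ∈ range (min p q + 1), wickTerm σii σjj σij p q k

variable {σii σjj σij}

theorem wickTerm_eq_zero {p q k : ℕ} (hk : min p q < k) : wickTerm σii σjj σij p q k = 0 := by
  rcases min_lt_iff.mp hk with hp | hq
  · simp [wickTerm, Nat.choose_eq_zero_of_lt hp]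
  · simp [wickTerm, Nat.choose_eq_zero_of_lt hq]

theorem sum_range_wickTerm {p q N : ℕ} (hN : min p q < N) :
    ∑ k ∈ range N, wickTerm σii σjj σij p q k = wickSum σii σjj σij p q := by
  refine (sum_subset (range_subset_range.mpr hN) fun k _ hk => ?_).symm
  exact wickTerm_eq_zero (by rw [mem_range] at hk; omega)

theorem wickTerm_comm (p q k : ℕ) : wickTerm σii σjj σij p q k = wickTerm σjj σii σij q p k := by
  simp only [wickTerm]; ring

theorem wickSum_comm (p q : ℕ) : wickSum σii σjj σij p q = wickSum σjj σii σij q p := by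
  simp only [wickSum, min_comm p q, wickTerm_comm p q]

theorem wickTerm_succ_left_succ (p q k : ℕ) :
    wickTerm σii σjj σij (p + 1) q (k + 1) =
      p * σii * wickTerm σii σjj σij (p - 1) q (k + 1) +
        q * σij * wickTerm σii σjj σij p (q - 1) k := by
  have hq : (q : ℝ) * ((q - 1).choose k : ℕ) = q.choose (k + 1) * (k + 1 : ℕ) := by
    exact_mod_cast Nat.mul_sub_one_choose q k
  have hp : (p.choose (k + 1) : ℝ) * centralGaussianMoment σii (p - k) =
      p * σii * ((p - 1).choose (k + 1) : ℕ) * centralGaussianMoment σii (p - 1 - (k + 1)) := by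
    rcases lt_or_ge k p with hk | hk
    · have hc : (p.choose (k + 1) : ℝ) * (p - (k + 1) : ℕ) = p * ((p - 1).choose (k + 1) : ℕ) := by
        exact_mod_cast Nat.choose_succ_mul_sub p k
      rw [show p - k = p - (k + 1) + 1 by omega, centralGaussianMoment_succ,
        show p - (k + 1) - 1 = p - 1 - (k + 1) by omega]
      linear_combination σii * centralGaussianMoment σii (p - 1 - (k + 1)) * hc
    · simp [Nat.choose_eq_zero_of_lt (show p < k + 1 by omega),
        Nat.choose_eq_zero_of_lt (show p - 1 < k + 1 by omega)]
  simp only [wickTerm, Nat.choose_succ_succ', Nat.add_sub_add_right,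
    show q - 1 - k = q - (k + 1) by omega, Nat.factorial_succ]
  push_cast at hq hp ⊢
  linear_combination (q.choose (k + 1) * ((k + 1) * k.factorial) * σij ^ (k + 1) *
    centralGaussianMoment σjj (q - (k + 1))) * hp - (p.choose k * k.factorial * σij ^ (k + 1) *
    centralGaussianMoment σii (p - k) * centralGaussianMoment σjj (q - (k + 1))) * hq

theorem wickTerm_succ_left_zero (p q : ℕ) :
    wickTerm σii σjj σij (p + 1) q 0 = p * σii * wickTerm σii σjj σij (p - 1) q 0 := by
  simp only [wickTerm, Nat.sub_zero, Nat.choose_zero_right, Nat.factorial_zero, Nat.cast_one,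
    pow_zero, centralGaussianMoment_succ]
  ring

theorem wickSum_succ_left (p q : ℕ) :
    wickSum σii σjj σij (p + 1) q =
      p * σii * wickSum σii σjj σij (p - 1) q + q * σij * wickSum σii σjj σij p (q - 1) := by
  rw [← sum_range_wickTerm (N := p + q + 2) (by omega),
    ← sum_range_wickTerm (p := p - 1) (N := p + q + 2) (by omega),
    ← sum_range_wickTerm (p := p) (q := q - 1) (N := p + q + 1) (by omega),
    sum_range_succ', sum_range_succ' _ (p + q + 1)]
  simp only [wickTerm_succ_left_succ, wickTerm_succ_left_zero, sum_add_distrib, mul_add, mul_sum]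
  ring

theorem wickSum_succ_right (p q : ℕ) :
    wickSum σii σjj σij p (q + 1) =
      q * σjj * wickSum σii σjj σij p (q - 1) + p * σij * wickSum σii σjj σij (p - 1) q := by
  simp only [wickSum_comm (σii := σii) (σjj := σjj)]
  exact wickSum_succ_left q p

theorem wickSum_zero_zero : wickSum σii σjj σij 0 0 = 1 := by
  simp [wickSum, wickTerm, centralGaussianMoment_zero]

theorem wickSum_eq_zero_of_odd {p q : ℕ} (h : Odd (p + q)) : wickSum σii σjj σij p q = 0 := by
  refine sum_eq_zero fun k hk => ?_
  have hk : k ≤ p ∧ k ≤ q := by rw [mem_range] at hk; omega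
  have : Odd (p - k) ∨ Odd (q - k) := by
    simp only [Nat.odd_iff] at h ⊢; omega
  rcases this with hp | hq
  · simp [wickTerm, centralGaussianMoment_eq_zero_of_odd σii hp]
  · simp [wickTerm, centralGaussianMoment_eq_zero_of_odd σjj hq]

theorem wickSum_of_even {p q : ℕ} (h : Even (p + q)) :
    wickSum σii σjj σij p q =
      ∑ k ∈ (range (min p q + 1)).filter (fun k => k % 2 = p % 2),
        oddDoubleFactorial ((p - k) / 2) * (p.choose k : ℝ) * (q.choose k : ℝ) *
          (k.factorial : ℝ) * oddDoubleFactorial ((q - k) / 2) *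
          σii ^ ((p - k) / 2) * σij ^ k * σjj ^ ((q - k) / 2) := by
  rw [sum_filter, wickSum]
  refine sum_congr rfl fun k hk => ?_
  have hk : k ≤ p ∧ k ≤ q := by rw [mem_range] at hk; omega
  split_ifs with hkp
  · have hp : Even (p - k) := by rw [Nat.even_iff]; omega
    have hq : Even (q - k) := by rw [Nat.even_iff] at h ⊢; omega
    simp only [wickTerm, centralGaussianMoment, if_pos hp, if_pos hq]
    ring
  · have hp : Odd (p - k) := by rw [Nat.odd_iff]; omega
    simp [wickTerm, centralGaussianMoment_eq_zero_of_odd σii hp]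

end Wick

section Analysis

variable {σii σjj σij : ℝ}

theorem gaussPDF2_comm (x w : ℝ) : gaussPDF2 σii σjj σij x w = gaussPDF2 σjj σii σij w x := by
  simp only [gaussPDF2]; ring_nf

theorem gaussPDF2_le (hii : 0 < σii) (hjj : 0 < σjj) (hd : 0 < σii * σjj - σij ^ 2) (x w : ℝ) :
    gaussPDF2 σii σjj σij x w ≤ (1 / (2 * π * √(σii * σjj - σij ^ 2))) *
      (rexp (-(2 * (σii + σjj))⁻¹ * x ^ 2) * rexp (-(2 * (σii + σjj))⁻¹ * w ^ 2)) := by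
  rw [gaussPDF2, ← Real.exp_add]
  gcongr
  -- the smallest eigenvalue of the covariance matrix is at least its determinant over its trace
  have hQ : (x ^ 2 + w ^ 2) * (σii * σjj - σij ^ 2) ≤
      (σjj * x ^ 2 - 2 * σij * x * w + σii * w ^ 2) * (σii + σjj) := by
    nlinarith [sq_nonneg (σjj * x - σij * w), sq_nonneg (σij * x - σii * w)]
  rw [div_le_iff₀ (by positivity)]
  field_simp
  nlinarith

theorem integrable_monomial_mul_gaussPDF2 (hii : 0 < σii) (hjj : 0 < σjj)
    (hd : 0 < σii * σjj - σij ^ 2) (p q : ℕ) :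
    Integrable (fun z : ℝ × ℝ => z.1 ^ p * z.2 ^ q * gaussPDF2 σii σjj σij z.1 z.2) := by
  set β := (2 * (σii + σjj))⁻¹
  have hβ : 0 < β := by positivity
  have h1 (n : ℕ) : Integrable (fun x : ℝ => x ^ n * rexp (-β * x ^ 2)) := by
    simpa [Real.rpow_natCast] using
      integrable_rpow_mul_exp_neg_mul_sq hβ (s := n) (by linarith [n.cast_nonneg (α := ℝ)])
  have hprod := (((h1 p).norm.mul_prod (h1 q).norm).const_mul
    (1 / (2 * π * √(σii * σjj - σij ^ 2))))
  rw [← Measure.volume_eq_prod] at hprod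
  refine hprod.mono' (by unfold gaussPDF2; fun_prop) (ae_of_all _ fun z => ?_)
  have hpos : 0 < gaussPDF2 σii σjj σij z.1 z.2 := by unfold gaussPDF2; positivity
  simp only [norm_mul, norm_pow, Real.norm_eq_abs, abs_of_pos hpos, abs_of_pos (Real.exp_pos _)]
  calc |z.1| ^ p * |z.2| ^ q * gaussPDF2 σii σjj σij z.1 z.2
      ≤ |z.1| ^ p * |z.2| ^ q * ((1 / (2 * π * √(σii * σjj - σij ^ 2))) *
        (rexp (-β * z.1 ^ 2) * rexp (-β * z.2 ^ 2))) := by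
        gcongr; exact gaussPDF2_le hii hjj hd z.1 z.2
    _ = _ := by ring

theorem hasDerivAt_gaussPDF2_fst (x w : ℝ) :
    HasDerivAt (fun x => gaussPDF2 σii σjj σij x w)
      ((σij * w - σjj * x) / (σii * σjj - σij ^ 2) * gaussPDF2 σii σjj σij x w) x := by
  have hQ : HasDerivAt (fun x => -(σjj * x ^ 2 - 2 * σij * x * w + σii * w ^ 2) /
      (2 * (σii * σjj - σij ^ 2))) ((σij * w - σjj * x) / (σii * σjj - σij ^ 2)) x := by
    refine (((((hasDerivAt_pow 2 x).const_mul σjj).sub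
      (((hasDerivAt_id x).const_mul (2 * σij)).mul_const w)).add_const (σii * w ^ 2)).neg.div_const
      (2 * (σii * σjj - σij ^ 2))).congr_deriv ?_
    field_simp
    ring
  unfold gaussPDF2
  exact (hQ.exp.const_mul _).congr_deriv (by ring)

variable (σii σjj σij) in
noncomputable def gaussMoment2 (p q : ℕ) : ℝ :=
  ∫ z : ℝ × ℝ, z.1 ^ p * z.2 ^ q * gaussPDF2 σii σjj σij z.1 z.2

theorem gaussMoment2_comm (p q : ℕ) :
    gaussMoment2 σii σjj σij p q = gaussMoment2 σjj σii σij q p := by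
  rw [gaussMoment2, gaussMoment2, Measure.volume_eq_prod, ← integral_prod_swap]
  congr 1; ext z
  rw [gaussPDF2_comm]; simp only [Prod.fst_swap, Prod.snd_swap]; ring

theorem gaussMoment2_integration_by_parts (hii : 0 < σii) (hjj : 0 < σjj)
    (hd : 0 < σii * σjj - σij ^ 2) (a b : ℕ) :
    σjj * gaussMoment2 σii σjj σij (a + 1) b - σij * gaussMoment2 σii σjj σij a (b + 1) =
      (σii * σjj - σij ^ 2) * a * gaussMoment2 σii σjj σij (a - 1) b := by
  have I := integrable_monomial_mul_gaussPDF2 hii hjj hd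
  have key := integral_bilinear_hasLineDerivAt_right_eq_neg_left_of_integrable
    (μ := volume) (B := ContinuousLinearMap.mul ℝ ℝ) (v := (1, 0))
    (f := fun z : ℝ × ℝ => z.1 ^ a * z.2 ^ b) (f' := fun z => a * z.1 ^ (a - 1) * z.2 ^ b)
    (g := fun z => gaussPDF2 σii σjj σij z.1 z.2)
    (g' := fun z => (σij * z.2 - σjj * z.1) / (σii * σjj - σij ^ 2) * gaussPDF2 σii σjj σij z.1 z.2)
    (((I (a - 1) b).const_mul a).congr
      (ae_of_all _ fun z => by simp only [ContinuousLinearMap.mul_apply']; ring))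
    ((((I a (b + 1)).const_mul (σij / (σii * σjj - σij ^ 2))).sub
      ((I (a + 1) b).const_mul (σjj / (σii * σjj - σij ^ 2)))).congr
      (ae_of_all _ fun z => by simp only [ContinuousLinearMap.mul_apply', Pi.sub_apply]; ring))
    ((I a b).congr (ae_of_all _ fun z => by simp only [ContinuousLinearMap.mul_apply']))
    (fun z _ => ((hasDerivAt_pow a z.1).mul_const (z.2 ^ b)).hasLineDerivAt_fst)
    (fun z _ => (hasDerivAt_gaussPDF2_fst z.1 z.2).hasLineDerivAt_fst)
  simp only [ContinuousLinearMap.mul_apply'] at key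
  have hL : ∫ z : ℝ × ℝ, z.1 ^ a * z.2 ^ b * ((σij * z.2 - σjj * z.1) / (σii * σjj - σij ^ 2) *
      gaussPDF2 σii σjj σij z.1 z.2) = (σij * gaussMoment2 σii σjj σij a (b + 1) -
        σjj * gaussMoment2 σii σjj σij (a + 1) b) / (σii * σjj - σij ^ 2) := by
    rw [gaussMoment2, gaussMoment2, ← integral_const_mul, ← integral_const_mul,
      ← integral_sub ((I _ _).const_mul _) ((I _ _).const_mul _), ← integral_div]
    congr 1; ext z; ring
  have hR : ∫ z : ℝ × ℝ, a * z.1 ^ (a - 1) * z.2 ^ b * gaussPDF2 σii σjj σij z.1 z.2 =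
      a * gaussMoment2 σii σjj σij (a - 1) b := by
    rw [gaussMoment2, ← integral_const_mul]
    congr 1; ext z; ring
  rw [hL, hR, div_eq_iff hd.ne'] at key
  linear_combination -key

theorem gaussMoment2_succ_left (hii : 0 < σii) (hjj : 0 < σjj) (hd : 0 < σii * σjj - σij ^ 2)
    (a b : ℕ) :
    gaussMoment2 σii σjj σij (a + 1) b = a * σii * gaussMoment2 σii σjj σij (a - 1) b +
      b * σij * gaussMoment2 σii σjj σij a (b - 1) := by
  have hx := gaussMoment2_integration_by_parts hii hjj hd a b
  have hw := gaussMoment2_integration_by_parts (σij := σij) hjj hii (by linarith) b a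
  simp only [← gaussMoment2_comm] at hw
  refine mul_left_cancel₀ hd.ne' ?_
  linear_combination σii * hx + σij * hw

theorem gaussMoment2_succ_right (hii : 0 < σii) (hjj : 0 < σjj) (hd : 0 < σii * σjj - σij ^ 2)
    (a b : ℕ) :
    gaussMoment2 σii σjj σij a (b + 1) = b * σjj * gaussMoment2 σii σjj σij a (b - 1) +
      a * σij * gaussMoment2 σii σjj σij (a - 1) b := by
  simp only [gaussMoment2_comm (σii := σii)]
  exact gaussMoment2_succ_left hjj hii (by linarith) b a

theorem gaussPDF2_eq_mul_gaussianPDFReal (hii : 0 < σii) (hd : 0 < σii * σjj - σij ^ 2)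
    (x w : ℝ) :
    gaussPDF2 σii σjj σij x w = gaussianPDFReal 0 σii.toNNReal x *
      gaussianPDFReal (σij / σii * x) ((σii * σjj - σij ^ 2) / σii).toNNReal w := by
  have hsqrt : √(2 * π * σii) * √(2 * π * ((σii * σjj - σij ^ 2) / σii)) =
      2 * π * √(σii * σjj - σij ^ 2) := by
    rw [← Real.sqrt_mul (by positivity), show 2 * π * σii * (2 * π * ((σii * σjj - σij ^ 2) / σii))
      = (2 * π) ^ 2 * (σii * σjj - σij ^ 2) by field_simp,
      Real.sqrt_mul (by positivity), Real.sqrt_sq (by positivity)]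
  have hexp : -(σjj * x ^ 2 - 2 * σij * x * w + σii * w ^ 2) / (2 * (σii * σjj - σij ^ 2)) =
      -(x - 0) ^ 2 / (2 * σii) +
        -(w - σij / σii * x) ^ 2 / (2 * ((σii * σjj - σij ^ 2) / σii)) := by
    rw [div_add_div _ _ (by positivity) (by positivity),
      div_eq_div_iff (by positivity) (by positivity)]
    field_simp
    ring
  rw [gaussPDF2, gaussianPDFReal, gaussianPDFReal, Real.coe_toNNReal _ hii.le,
    Real.coe_toNNReal _ (by positivity), hexp, Real.exp_add, ← hsqrt]
  field_simp

theorem gaussMoment2_zero_zero (hii : 0 < σii) (hjj : 0 < σjj) (hd : 0 < σii * σjj - σij ^ 2) :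
    gaussMoment2 σii σjj σij 0 0 = 1 := by
  have hint := integrable_monomial_mul_gaussPDF2 hii hjj hd 0 0
  simp only [pow_zero, one_mul] at hint
  rw [Measure.volume_eq_prod] at hint
  have hv : ((σii * σjj - σij ^ 2) / σii).toNNReal ≠ 0 :=
    (Real.toNNReal_pos.mpr (by positivity)).ne'
  rw [gaussMoment2]
  simp only [pow_zero, one_mul]
  rw [Measure.volume_eq_prod, integral_prod _ hint]
  simp only [gaussPDF2_eq_mul_gaussianPDFReal hii hd, integral_const_mul,
    integral_gaussianPDFReal_eq_one _ hv, mul_one]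
  exact integral_gaussianPDFReal_eq_one _ (Real.toNNReal_pos.mpr hii).ne'

end Analysis

theorem gaussMoment2_eq_wickSum {σii σjj σij : ℝ} (hii : 0 < σii) (hjj : 0 < σjj)
    (hd : 0 < σii * σjj - σij ^ 2) (p q : ℕ) :
    gaussMoment2 σii σjj σij p q = wickSum σii σjj σij p q := by
  induction hn : p + q using Nat.strong_induction_on generalizing p q with
  | _ n ih =>
    rcases p with _ | p
    · rcases q with _ | q
      · rw [gaussMoment2_zero_zero hii hjj hd, wickSum_zero_zero]
      · rw [gaussMoment2_succ_right hii hjj hd, wickSum_succ_right,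
          ih _ (by omega) 0 (q - 1) rfl, ih _ (by omega) (0 - 1) q rfl]
    · rw [gaussMoment2_succ_left hii hjj hd, wickSum_succ_left,
        ih _ (by omega) (p - 1) q rfl, ih _ (by omega) p (q - 1) rfl]

theorem wick_mixed_moments
    (σii σjj σij : ℝ) (hii : 0 < σii) (hjj : 0 < σjj)
    (hd : 0 < σii * σjj - σij ^ 2) :
    ∀ p q : ℕ,
      (Odd (p + q) →
        ∫ z : ℝ × ℝ, z.1 ^ p * z.2 ^ q * gaussPDF2 σii σjj σij z.1 z.2 = 0) ∧
      (Even (p + q) →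
        ∫ z : ℝ × ℝ, z.1 ^ p * z.2 ^ q * gaussPDF2 σii σjj σij z.1 z.2 =
          ∑ k ∈ (Finset.range (min p q + 1)).filter (fun k => k % 2 = p % 2),
            oddDoubleFactorial ((p - k) / 2) * (p.choose k : ℝ) * (q.choose k : ℝ) *
              (k.factorial : ℝ) * oddDoubleFactorial ((q - k) / 2) *
              σii ^ ((p - k) / 2) * σij ^ k * σjj ^ ((q - k) / 2)) := by
  intro p q
  have h := gaussMoment2_eq_wickSum hii hjj hd p q
  exact ⟨fun hodd => h.trans (wickSum_eq_zero_of_odd hodd),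
    fun heven => h.trans (wickSum_of_even heven)⟩
end

section
/- Let f : ℝ → ℝ be infinitely differentiable with |f⁽ᵃ⁾(0)| ≤ C·Kᵃ for all a ∈ ℕ (for some constants C, K > 0) and such that f(x) = Σ_{a≥0} f⁽ᵃ⁾(0)·xᵃ/a! for all x ∈ ℝ. Then for every σ > 0, ∫_ℝ f(x)·φ_σ(x) dx = Σ_{u≥0} (f⁽²ᵘ⁾(0)/u!)·(σ/2)ᵘ; that is, the transformed mean equals F₀(σ/2), where F_k(x) := Σ_{u≥0} f⁽²ᵘ⁺ᵏ⁾(0)·xᵘ/u!. -/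
open MeasureTheory Real

lemma integrable_pow_gauss {b : ℝ} (hb : 0 < b) (n : ℕ) :
    Integrable fun x : ℝ => x ^ n * Real.exp (-b * x ^ 2) := by
  have h : (-1 : ℝ) < (n : ℝ) :=
    lt_of_lt_of_le (by norm_num) (Nat.cast_nonneg n)
  simpa [Real.rpow_natCast] using integrable_rpow_mul_exp_neg_mul_sq hb h

lemma moment_rec {b : ℝ} (hb : 0 < b) (n : ℕ) :
    ∫ x : ℝ, x ^ (n + 2) * Real.exp (-b * x ^ 2)
      = ((n : ℝ) + 1) / (2 * b) * ∫ x : ℝ, x ^ n * Real.exp (-b * x ^ 2) := by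
  have hu : ∀ x : ℝ, HasDerivAt (fun x : ℝ => x ^ (n + 1))
      (((n : ℝ) + 1) * x ^ n) x := by
    intro x
    have := hasDerivAt_pow (n + 1) x
    simpa [Nat.cast_add] using this
  have hv : ∀ x : ℝ, HasDerivAt (fun x : ℝ => Real.exp (-b * x ^ 2))
      (Real.exp (-b * x ^ 2) * (-b * (2 * x ^ 1))) x := by
    intro x
    exact (((hasDerivAt_pow 2 x).const_mul (-b)).exp).congr_deriv (by norm_num)
  have h1 : Integrable ((fun x : ℝ => x ^ (n + 1)) *
      fun x : ℝ => Real.exp (-b * x ^ 2) * (-b * (2 * x ^ 1))) := by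
    refine ((integrable_pow_gauss hb (n + 2)).const_mul (-(2 * b))).congr
      (ae_of_all _ fun x => ?_)
    simp only [Pi.mul_apply]
    ring
  have h2 : Integrable ((fun x : ℝ => ((n : ℝ) + 1) * x ^ n) *
      fun x : ℝ => Real.exp (-b * x ^ 2)) := by
    refine ((integrable_pow_gauss hb n).const_mul ((n : ℝ) + 1)).congr
      (ae_of_all _ fun x => ?_)
    simp only [Pi.mul_apply]
    ring
  have h3 : Integrable ((fun x : ℝ => x ^ (n + 1)) *
      fun x : ℝ => Real.exp (-b * x ^ 2)) := by
    refine (integrable_pow_gauss hb (n + 1)).congr (ae_of_all _ fun x => ?_)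
    simp only [Pi.mul_apply]
  have key := integral_mul_deriv_eq_deriv_mul_of_integrable (fun x _ => hu x) (fun x _ => hv x) h1 h2 h3
  have lhs : ∫ x : ℝ, x ^ (n + 1) * (Real.exp (-b * x ^ 2) * (-b * (2 * x ^ 1)))
      = (-(2 * b)) * ∫ x : ℝ, x ^ (n + 2) * Real.exp (-b * x ^ 2) := by
    rw [← MeasureTheory.integral_const_mul]
    congr 1; funext x; ring
  have rhs : ∫ x : ℝ, ((n : ℝ) + 1) * x ^ n * Real.exp (-b * x ^ 2)
      = ((n : ℝ) + 1) * ∫ x : ℝ, x ^ n * Real.exp (-b * x ^ 2) := by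
    rw [← MeasureTheory.integral_const_mul]
    congr 1; funext x; ring
  rw [lhs, rhs] at key
  have hb' : (2 * b) ≠ 0 := by positivity
  rw [div_mul_eq_mul_div, eq_div_iff hb']
  linarith [key]

lemma moment_odd (b : ℝ) (u : ℕ) :
    ∫ x : ℝ, x ^ (2 * u + 1) * Real.exp (-b * x ^ 2) = 0 := by
  have h := integral_neg_eq_self (fun x : ℝ => x ^ (2 * u + 1) * Real.exp (-b * x ^ 2))
    (volume : Measure ℝ)
  have h2 : ∀ x : ℝ, (-x) ^ (2 * u + 1) * Real.exp (-b * (-x) ^ 2)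
      = -(x ^ (2 * u + 1) * Real.exp (-b * x ^ 2)) := by
    intro x
    rw [Odd.neg_pow ⟨u, by ring⟩, neg_sq]
    ring
  simp only [h2, integral_neg] at h
  linarith

lemma gaussPDF1_eq {σ : ℝ} (x : ℝ) :
    gaussPDF1 σ x = (Real.sqrt (2 * π * σ))⁻¹ * Real.exp (-(2 * σ)⁻¹ * x ^ 2) := by
  unfold gaussPDF1
  rw [one_div]
  congr 1
  rw [neg_div, div_eq_mul_inv, mul_comm]
  ring_nf

lemma gaussPDF1_nonneg (σ x : ℝ) : 0 ≤ gaussPDF1 σ x := by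
  unfold gaussPDF1
  positivity

lemma integral_pow_gaussPDF1 {σ : ℝ} (hσ : 0 < σ) (n : ℕ) :
    ∫ x : ℝ, x ^ n * gaussPDF1 σ x
      = (Real.sqrt (2 * π * σ))⁻¹ * ∫ x : ℝ, x ^ n * Real.exp (-(2 * σ)⁻¹ * x ^ 2) := by
  rw [← MeasureTheory.integral_const_mul]
  congr 1; funext x
  rw [gaussPDF1_eq]
  ring

lemma odd_moment_pdf {σ : ℝ} (hσ : 0 < σ) (u : ℕ) :
    ∫ x : ℝ, x ^ (2 * u + 1) * gaussPDF1 σ x = 0 := by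
  rw [integral_pow_gaussPDF1 hσ, moment_odd, mul_zero]

lemma even_moment_pdf {σ : ℝ} (hσ : 0 < σ) (u : ℕ) :
    ∫ x : ℝ, x ^ (2 * u) * gaussPDF1 σ x
      = ((2 * u).factorial : ℝ) / (u.factorial : ℝ) * (σ / 2) ^ u := by
  have hb : (0 : ℝ) < (2 * σ)⁻¹ := by positivity
  induction u with
  | zero =>
      simp only [Nat.mul_zero, pow_zero, one_mul, Nat.factorial_zero, Nat.cast_one]
      simp_rw [gaussPDF1_eq]
      rw [MeasureTheory.integral_const_mul, integral_gaussian]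
      have h3 : π / (2 * σ)⁻¹ = 2 * π * σ := by
        field_simp
      have hs : Real.sqrt (2 * π * σ) ≠ 0 := by
        refine (Real.sqrt_ne_zero').mpr ?_
        positivity
      rw [h3]
      field_simp
  | succ u ih =>
      have e1 : 2 * (u + 1) = 2 * u + 2 := by ring
      have hne : ((u.factorial : ℝ)) ≠ 0 := Nat.cast_ne_zero.mpr u.factorial_ne_zero
      have hσ' : σ ≠ 0 := ne_of_gt hσ
      have hfac : ((2 * u + 2).factorial : ℝ)
          = (2 * (u:ℝ) + 2) * (2 * (u:ℝ) + 1) * ((2 * u).factorial : ℝ) := by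
        have e2 : 2 * u + 2 = (2 * u + 1) + 1 := by ring
        rw [e2, Nat.factorial_succ, Nat.factorial_succ]
        push_cast; ring
      have hfac2 : ((u + 1).factorial : ℝ) = ((u : ℝ) + 1) * (u.factorial : ℝ) := by
        rw [Nat.factorial_succ]; push_cast; ring
      have step : ∫ x : ℝ, x ^ (2 * u + 2) * gaussPDF1 σ x
          = (((2 * u : ℕ) : ℝ) + 1) / (2 * (2 * σ)⁻¹) *
            ∫ x : ℝ, x ^ (2 * u) * gaussPDF1 σ x := by
        rw [integral_pow_gaussPDF1 hσ, moment_rec hb (2 * u), integral_pow_gaussPDF1 hσ]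
        ring
      rw [e1, step, ih, hfac, hfac2]
      push_cast
      field_simp
      ring


set_option maxHeartbeats 1000000 in
theorem transformed_mean_series
    (f : ℝ → ℝ) (hf : ContDiff ℝ (⊤ : ℕ∞) f)
    (C K : ℝ) (hC : 0 < C) (hK : 0 < K)
    (hb : ∀ a : ℕ, |iteratedDeriv a f 0| ≤ C * K ^ a)
    (htaylor : ∀ x : ℝ, f x = ∑' a : ℕ, iteratedDeriv a f 0 * x ^ a / (a.factorial : ℝ))
    (σ : ℝ) (hσ : 0 < σ) :
    ∫ x : ℝ, f x * gaussPDF1 σ x =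
      ∑' u : ℕ, iteratedDeriv (2 * u) f 0 / (u.factorial : ℝ) * (σ / 2) ^ u := by
  classical
  have hbpos : (0 : ℝ) < (2 * σ)⁻¹ := by positivity
  set g : ℕ → ℝ → ℝ :=
    fun a x => iteratedDeriv a f 0 * x ^ a / (a.factorial : ℝ) * gaussPDF1 σ x with hg
  have hInt : ∀ a : ℕ, Integrable (g a) := by
    intro a
    refine ((integrable_pow_gauss hbpos a).const_mul
      (iteratedDeriv a f 0 / (a.factorial : ℝ) * (Real.sqrt (2 * π * σ))⁻¹)).congr
      (ae_of_all _ fun x => ?_)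
    simp only [hg]
    rw [gaussPDF1_eq]
    ring
  -- integrable dominating function
  have hBint : Integrable (fun x : ℝ => C * Real.exp (K * |x|) * gaussPDF1 σ x) := by
    refine Integrable.mono'
      ((integrable_exp_neg_mul_sq (show (0:ℝ) < (2*σ)⁻¹/2 by positivity)).const_mul
        (C * (Real.sqrt (2 * π * σ))⁻¹ * Real.exp (K ^ 2 / (2 * (2*σ)⁻¹)))) ?_ ?_
    · apply Continuous.aestronglyMeasurable
      have hcg : Continuous (gaussPDF1 σ) := by
        unfold gaussPDF1; fun_prop
      fun_prop
    · filter_upwards with x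
      have h0 : (0:ℝ) ≤ C * Real.exp (K * |x|) * gaussPDF1 σ x := by
        have := gaussPDF1_nonneg σ x
        positivity
      rw [Real.norm_eq_abs, abs_of_nonneg h0]
      have hq : K * |x| + -(2*σ)⁻¹ * x ^ 2
          ≤ K ^ 2 / (2 * (2*σ)⁻¹) + -((2*σ)⁻¹/2) * x ^ 2 := by
        have h2b : (0:ℝ) < 2 * (2*σ)⁻¹ := by positivity
        have h1 : 2 * (2*σ)⁻¹ * (K * |x|) ≤ K ^ 2 + ((2*σ)⁻¹) ^ 2 * x ^ 2 := by
          nlinarith [sq_nonneg (K - (2*σ)⁻¹ * |x|), sq_abs x]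
        have h2 : K * |x| ≤ (K ^ 2 + ((2*σ)⁻¹) ^ 2 * x ^ 2) / (2 * (2*σ)⁻¹) :=
          (le_div_iff₀ h2b).mpr (by linarith)
        have h3 : (K ^ 2 + ((2*σ)⁻¹) ^ 2 * x ^ 2) / (2 * (2*σ)⁻¹)
            = K ^ 2 / (2 * (2*σ)⁻¹) + (2*σ)⁻¹/2 * x ^ 2 := by
          field_simp
        rw [h3] at h2
        linarith
      calc C * Real.exp (K * |x|) * gaussPDF1 σ x
          = C * (Real.sqrt (2 * π * σ))⁻¹ *
            Real.exp (K * |x| + -(2*σ)⁻¹ * x ^ 2) := by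
            rw [gaussPDF1_eq, Real.exp_add]; ring
        _ ≤ C * (Real.sqrt (2 * π * σ))⁻¹ *
            Real.exp (K ^ 2 / (2 * (2*σ)⁻¹) + -((2*σ)⁻¹/2) * x ^ 2) := by
            apply mul_le_mul_of_nonneg_left (Real.exp_le_exp.mpr hq) (by positivity)
        _ = C * (Real.sqrt (2 * π * σ))⁻¹ * Real.exp (K ^ 2 / (2 * (2*σ)⁻¹)) *
            Real.exp (-((2*σ)⁻¹/2) * x ^ 2) := by
            rw [Real.exp_add]; ring
  have hnorm : ∀ (a : ℕ) (x : ℝ), ‖g a x‖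
      = |iteratedDeriv a f 0| * |x| ^ a / (a.factorial : ℝ) * gaussPDF1 σ x := by
    intro a x
    simp only [hg]
    rw [Real.norm_eq_abs, abs_mul, abs_div, abs_mul, abs_pow,
      abs_of_nonneg (gaussPDF1_nonneg σ x), Nat.abs_cast]
  have hsum : Summable fun a : ℕ => ∫ x : ℝ, ‖g a x‖ := by
    apply summable_of_sum_range_le
      (c := ∫ x : ℝ, C * Real.exp (K * |x|) * gaussPDF1 σ x)
    · intro a; exact integral_nonneg fun x => norm_nonneg _
    · intro n
      rw [← integral_finset_sum _ (fun a _ => (hInt a).norm)]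
      refine integral_mono (integrable_finset_sum _ fun a _ => (hInt a).norm) hBint ?_
      intro x
      simp only [hnorm]
      have hfac : ∀ a : ℕ, (0:ℝ) < (a.factorial : ℝ) := fun a =>
        Nat.cast_pos.mpr a.factorial_pos
      calc ∑ a ∈ Finset.range n,
            |iteratedDeriv a f 0| * |x| ^ a / (a.factorial : ℝ) * gaussPDF1 σ x
          ≤ ∑ a ∈ Finset.range n,
            C * (K * |x|) ^ a / (a.factorial : ℝ) * gaussPDF1 σ x := by
            refine Finset.sum_le_sum fun a _ => ?_
            refine mul_le_mul_of_nonneg_right ?_ (gaussPDF1_nonneg σ x)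
            refine (div_le_div_iff_of_pos_right (hfac a)).mpr ?_
            rw [mul_pow]
            calc |iteratedDeriv a f 0| * |x| ^ a
                ≤ C * K ^ a * |x| ^ a :=
                  mul_le_mul_of_nonneg_right (hb a) (by positivity)
              _ = C * (K ^ a * |x| ^ a) := by ring
        _ = C * (∑ a ∈ Finset.range n, (K * |x|) ^ a / (a.factorial : ℝ)) *
            gaussPDF1 σ x := by
            simp_rw [mul_div_assoc]
            rw [← Finset.sum_mul, ← Finset.mul_sum]
        _ ≤ C * Real.exp (K * |x|) * gaussPDF1 σ x := by
            refine mul_le_mul_of_nonneg_right ?_ (gaussPDF1_nonneg σ x)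
            exact mul_le_mul_of_nonneg_left
              (Real.sum_le_exp_of_nonneg (by positivity) n) hC.le
  have hswap := MeasureTheory.hasSum_integral_of_summable_integral_norm hInt hsum
  have hpt : ∀ x : ℝ, (∑' a : ℕ, g a x) = f x * gaussPDF1 σ x := by
    intro x
    rw [htaylor x]
    simp only [hg]
    exact tsum_mul_right
  simp_rw [hpt] at hswap
  have hval : ∀ a : ℕ, ∫ x : ℝ, g a x
      = iteratedDeriv a f 0 / (a.factorial : ℝ) * ∫ x : ℝ, x ^ a * gaussPDF1 σ x := by
    intro a
    rw [← MeasureTheory.integral_const_mul]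
    congr 1; funext x; simp only [hg]; ring
  have hodd : ∀ u : ℕ, (∫ x : ℝ, g (2 * u + 1) x) = 0 := by
    intro u; rw [hval, odd_moment_pdf hσ, mul_zero]
  have heven : ∀ u : ℕ, (∫ x : ℝ, g (2 * u) x)
      = iteratedDeriv (2 * u) f 0 / (u.factorial : ℝ) * (σ / 2) ^ u := by
    intro u
    rw [hval, even_moment_pdf hσ]
    have h1 : (((2*u).factorial : ℝ)) ≠ 0 := Nat.cast_ne_zero.mpr (Nat.factorial_ne_zero _)
    have h2 : ((u.factorial : ℝ)) ≠ 0 := Nat.cast_ne_zero.mpr (Nat.factorial_ne_zero _)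
    field_simp
  have hS : Summable fun a : ℕ => ∫ x : ℝ, g a x := ⟨_, hswap⟩
  have hinj : Function.Injective (fun u : ℕ => 2 * u) :=
    mul_right_injective₀ two_ne_zero
  have he : Summable fun u : ℕ => ∫ x : ℝ, g (2 * u) x := hS.comp_injective hinj
  have ho : Summable fun u : ℕ => ∫ x : ℝ, g (2 * u + 1) x := by
    apply Summable.congr summable_zero
    intro u; exact (hodd u).symm
  rw [← hswap.tsum_eq, ← tsum_even_add_odd he ho]
  have hz : (∑' u : ℕ, ∫ x : ℝ, g (2 * u + 1) x) = 0 := by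
    rw [tsum_congr hodd, tsum_zero]
  rw [hz, add_zero]
  exact tsum_congr heven
end

section
/- Let K ∈ ℕ and let f₁, f₂ : ℝ → ℝ be real-valued trigonometric polynomials given by f₁(x) = Σ_{n=−K}^{K} aₙ·e^{i·n·x} and f₂(x) = Σ_{m=−K}^{K} b_m·e^{i·m·x} with complex coefficients aₙ, b_m. Then the transformed covariance satisfies τ(f₁,f₂) = Σ_{n=−K}^{K} Σ_{m=−K}^{K} aₙ·b_m·(e^{−n·m·σij} − 1)·e^{−(n²·σii + m²·σjj)/2}. -/
open MeasureTheory Real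

/-!
By linearity, τ(f₁, f₂) is determined by the values of ν and of the joint integral on the
exponentials `x ↦ exp(c x)` and `(x, w) ↦ exp(c₁ x + c₂ w)`. The first is the complex moment
generating function `exp(σ c² / 2)` of the centred Gaussian. For the second, the bivariate density
factors as `φ_{σii}(x) · φ_{d/σii}(w - (σij/σii) x)`, and the volume-preserving shear
`(x, w) ↦ (x, w - (σij/σii) x)` turns the joint integral into a product of two one-dimensional
ones, giving `exp((σii c₁² + 2 σij c₁ c₂ + σjj c₂²) / 2)`. With `c₁ = i n`, `c₂ = i m` the cross
term `exp(-n m σij)` is exactly what separates the joint moment from the product of the means.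
-/

open ProbabilityTheory

lemma gaussPDF1_eq_gaussianPDFReal {σ : ℝ} (hσ : 0 < σ) :
    gaussPDF1 σ = gaussianPDFReal 0 σ.toNNReal := by
  ext x
  simp [gaussPDF1, gaussianPDFReal, hσ.le]

lemma integral_cexp_mul_gaussPDF1 {σ : ℝ} (hσ : 0 < σ) (c : ℂ) :
    ∫ x : ℝ, Complex.exp (c * x) * gaussPDF1 σ x = Complex.exp (σ * c ^ 2 / 2) := by
  have hv : σ.toNNReal ≠ 0 := (Real.toNNReal_pos.mpr hσ).ne'
  calc ∫ x : ℝ, Complex.exp (c * x) * gaussPDF1 σ x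
      = ∫ x, gaussianPDFReal 0 σ.toNNReal x • Complex.exp (c * x) := by
        simp_rw [gaussPDF1_eq_gaussianPDFReal hσ, Complex.real_smul, mul_comm]
    _ = complexMGF id (gaussianReal 0 σ.toNNReal) c := by
        rw [complexMGF, integral_gaussianReal_eq_integral_smul hv]; rfl
    _ = Complex.exp (σ * c ^ 2 / 2) := by simp [complexMGF_id_gaussianReal, hσ.le]

lemma integrable_cexp_mul_gaussPDF1 {σ : ℝ} (hσ : 0 < σ) (c : ℂ) :
    Integrable fun x : ℝ ↦ Complex.exp (c * x) * gaussPDF1 σ x :=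
  Integrable.of_integral_ne_zero <| by
    rw [integral_cexp_mul_gaussPDF1 hσ]; exact Complex.exp_ne_zero _

def shearSubMul (α : ℝ) : ℝ × ℝ ≃ᵐ ℝ × ℝ where
  toFun q := (q.1, q.2 - α * q.1)
  invFun q := (q.1, q.2 + α * q.1)
  left_inv q := by simp
  right_inv q := by simp
  measurable_toFun := by dsimp only [Equiv.coe_fn_mk]; fun_prop
  measurable_invFun := by dsimp only [Equiv.coe_fn_symm_mk]; fun_prop

lemma measurePreserving_shearSubMul (α : ℝ) : MeasurePreserving (shearSubMul α) := by
  rw [Measure.volume_eq_prod]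
  exact (MeasurePreserving.id volume).skew_product (g := fun x w ↦ w - α * x) (by fun_prop)
    (ae_of_all _ fun x ↦ map_sub_right_eq_self volume (α * x))

lemma integral_mul_comp_sub_mul {𝕜 : Type*} [RCLike 𝕜] (α : ℝ) (g h : ℝ → 𝕜) :
    ∫ q : ℝ × ℝ, g q.1 * h (q.2 - α * q.1) = (∫ x, g x) * ∫ u, h u := by
  refine ((measurePreserving_shearSubMul α).integral_comp' (fun q ↦ g q.1 * h q.2)).trans ?_
  rw [Measure.volume_eq_prod, integral_prod_mul]

lemma gaussPDF2_eq_mul {σii σjj σij : ℝ} (hii : 0 < σii) (hd : 0 < σii * σjj - σij ^ 2)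
    (x w : ℝ) :
    gaussPDF2 σii σjj σij x w =
      gaussPDF1 σii x * gaussPDF1 ((σii * σjj - σij ^ 2) / σii) (w - σij / σii * x) := by
  have hsqrt : √(2 * π * σii) * √(2 * π * ((σii * σjj - σij ^ 2) / σii)) =
      2 * π * √(σii * σjj - σij ^ 2) := by
    rw [← Real.sqrt_mul (by positivity), show 2 * π * σii * (2 * π * ((σii * σjj - σij ^ 2) / σii))
      = (2 * π) ^ 2 * (σii * σjj - σij ^ 2) by field_simp, Real.sqrt_mul (by positivity),
      Real.sqrt_sq (by positivity)]
  rw [gaussPDF2, gaussPDF1, gaussPDF1, mul_mul_mul_comm, ← Real.exp_add, one_div_mul_one_div,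
    hsqrt]
  congr 2
  rw [div_add_div _ _ (by positivity) (by positivity), div_eq_div_iff (by positivity) (by positivity)]
  field_simp
  ring

lemma integral_cexp_mul_gaussPDF2 {σii σjj σij : ℝ} (hii : 0 < σii)
    (hd : 0 < σii * σjj - σij ^ 2) (c₁ c₂ : ℂ) :
    ∫ q : ℝ × ℝ, Complex.exp (c₁ * q.1 + c₂ * q.2) * gaussPDF2 σii σjj σij q.1 q.2 =
      Complex.exp ((σii * c₁ ^ 2 + 2 * σij * c₁ * c₂ + σjj * c₂ ^ 2) / 2) := by
  have hs : 0 < (σii * σjj - σij ^ 2) / σii := by positivity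
  have hfactor : ∀ q : ℝ × ℝ,
      Complex.exp (c₁ * q.1 + c₂ * q.2) * gaussPDF2 σii σjj σij q.1 q.2 =
        Complex.exp ((c₁ + ↑(σij / σii) * c₂) * q.1) * gaussPDF1 σii q.1 *
          (Complex.exp (c₂ * ↑(q.2 - σij / σii * q.1)) *
            gaussPDF1 ((σii * σjj - σij ^ 2) / σii) (q.2 - σij / σii * q.1)) := by
    intro q
    rw [gaussPDF2_eq_mul hii hd, show c₁ * q.1 + c₂ * q.2 =
      (c₁ + ↑(σij / σii) * c₂) * q.1 + c₂ * ↑(q.2 - σij / σii * q.1) by push_cast; ring,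
      Complex.exp_add]
    push_cast
    ring
  simp_rw [hfactor]
  refine (integral_mul_comp_sub_mul (σij / σii)
    (fun x ↦ Complex.exp ((c₁ + ↑(σij / σii) * c₂) * x) * gaussPDF1 σii x)
    (fun u ↦ Complex.exp (c₂ * u) * gaussPDF1 ((σii * σjj - σij ^ 2) / σii) u)).trans ?_
  rw [integral_cexp_mul_gaussPDF1 hii, integral_cexp_mul_gaussPDF1 hs, ← Complex.exp_add]
  have : (σii : ℂ) ≠ 0 := by exact_mod_cast hii.ne'
  congr 1
  push_cast
  field_simp
  ring

lemma integrable_cexp_mul_gaussPDF2 {σii σjj σij : ℝ} (hii : 0 < σii)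
    (hd : 0 < σii * σjj - σij ^ 2) (c₁ c₂ : ℂ) :
    Integrable fun q : ℝ × ℝ ↦
      Complex.exp (c₁ * q.1 + c₂ * q.2) * gaussPDF2 σii σjj σij q.1 q.2 :=
  Integrable.of_integral_ne_zero <| by
    rw [integral_cexp_mul_gaussPDF2 hii hd]; exact Complex.exp_ne_zero _

lemma integral_sum_mul {α ι 𝕜 : Type*} [MeasurableSpace α] [RCLike 𝕜] {μ : Measure α}
    (s : Finset ι) (a : ι → 𝕜) (e : ι → α → 𝕜) (ρ : α → 𝕜)
    (he : ∀ i ∈ s, Integrable (fun x ↦ e i x * ρ x) μ) :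
    ∫ x, (∑ i ∈ s, a i * e i x) * ρ x ∂μ = ∑ i ∈ s, a i * ∫ x, e i x * ρ x ∂μ := by
  simp_rw [Finset.sum_mul, mul_assoc]
  rw [integral_finsetSum s fun i hi ↦ (he i hi).const_mul (a i)]
  simp_rw [integral_const_mul]

lemma ofReal_transMean_eq_sum {σ : ℝ} (hσ : 0 < σ) (s : Finset ℤ) (a : ℤ → ℂ) {f : ℝ → ℝ}
    (hf : ∀ x : ℝ, (f x : ℂ) = ∑ n ∈ s, a n * Complex.exp (Complex.I * n * x)) :
    (transMean σ f : ℂ) = ∑ n ∈ s, a n * Complex.exp (-(n ^ 2 * σ / 2)) := by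
  rw [transMean, ← integral_complex_ofReal]
  simp_rw [Complex.ofReal_mul, hf]
  rw [integral_sum_mul s a _ _ fun n _ ↦ integrable_cexp_mul_gaussPDF1 hσ _]
  refine Finset.sum_congr rfl fun n _ ↦ ?_
  rw [integral_cexp_mul_gaussPDF1 hσ]
  congr 2
  linear_combination (σ * n ^ 2 / 2 : ℂ) * Complex.I_sq

lemma ofReal_integral_mul_gaussPDF2_eq_sum {σii σjj σij : ℝ} (hii : 0 < σii)
    (hd : 0 < σii * σjj - σij ^ 2) (s t : Finset ℤ) (a b : ℤ → ℂ) {f g : ℝ → ℝ}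
    (hf : ∀ x : ℝ, (f x : ℂ) = ∑ n ∈ s, a n * Complex.exp (Complex.I * n * x))
    (hg : ∀ w : ℝ, (g w : ℂ) = ∑ m ∈ t, b m * Complex.exp (Complex.I * m * w)) :
    ((∫ q : ℝ × ℝ, f q.1 * g q.2 * gaussPDF2 σii σjj σij q.1 q.2 : ℝ) : ℂ) =
      ∑ n ∈ s, ∑ m ∈ t, a n * b m *
        Complex.exp (-((n ^ 2 * σii + 2 * n * m * σij + m ^ 2 * σjj) / 2)) := by
  have hprod : ∀ q : ℝ × ℝ, (f q.1 * g q.2 : ℂ) = ∑ p ∈ s ×ˢ t, a p.1 * b p.2 *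
      Complex.exp (Complex.I * p.1 * q.1 + Complex.I * p.2 * q.2) := by
    intro q
    rw [hf, hg, Finset.sum_mul_sum, Finset.sum_product]
    simp only [Complex.exp_add, mul_mul_mul_comm]
  rw [← integral_complex_ofReal]
  simp_rw [Complex.ofReal_mul, hprod]
  rw [integral_sum_mul _ _ _ _ fun p _ ↦ integrable_cexp_mul_gaussPDF2 hii hd _ _,
    Finset.sum_product]
  refine Finset.sum_congr rfl fun n _ ↦ Finset.sum_congr rfl fun m _ ↦ ?_
  rw [integral_cexp_mul_gaussPDF2 hii hd]
  congr 2
  linear_combination ((σii * n ^ 2 + 2 * σij * n * m + σjj * m ^ 2) / 2 : ℂ) * Complex.I_sq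

theorem transformed_covariance_fourier_series_trigpoly
    (σii σjj σij : ℝ) (hii : 0 < σii) (hjj : 0 < σjj)
    (hd : 0 < σii * σjj - σij ^ 2)
    (K : ℕ) (a b : ℤ → ℂ) (f₁ f₂ : ℝ → ℝ)
    (hf₁ : ∀ x : ℝ, (f₁ x : ℂ) =
      ∑ n ∈ Finset.Icc (-(K : ℤ)) (K : ℤ), a n * Complex.exp (Complex.I * n * x))
    (hf₂ : ∀ x : ℝ, (f₂ x : ℂ) =
      ∑ m ∈ Finset.Icc (-(K : ℤ)) (K : ℤ), b m * Complex.exp (Complex.I * m * x)) :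
    (transCov σii σjj σij f₁ f₂ : ℂ) =
      ∑ n ∈ Finset.Icc (-(K : ℤ)) (K : ℤ), ∑ m ∈ Finset.Icc (-(K : ℤ)) (K : ℤ),
        a n * b m * (Complex.exp (-((n : ℝ) * (m : ℝ) * σij : ℝ)) - 1) *
          Complex.exp (-(((n : ℝ) ^ 2 * σii + (m : ℝ) ^ 2 * σjj) / 2 : ℝ)) := by
  rw [transCov, Complex.ofReal_sub, Complex.ofReal_mul,
    ofReal_integral_mul_gaussPDF2_eq_sum hii hd _ _ a b hf₁ hf₂,
    ofReal_transMean_eq_sum hii _ a hf₁, ofReal_transMean_eq_sum hjj _ b hf₂,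
    Finset.sum_mul_sum, ← Finset.sum_sub_distrib]
  refine Finset.sum_congr rfl fun n _ ↦ ?_
  rw [← Finset.sum_sub_distrib]
  refine Finset.sum_congr rfl fun m _ ↦ ?_
  have hsplit : -(((n : ℂ) ^ 2 * σii + 2 * n * m * σij + m ^ 2 * σjj) / 2) =
      -((n : ℝ) * (m : ℝ) * σij : ℝ) + -(((n : ℝ) ^ 2 * σii + (m : ℝ) ^ 2 * σjj) / 2 : ℝ) := by
    push_cast; ring
  have hmarginal : -((n : ℂ) ^ 2 * σii / 2) + -((m : ℂ) ^ 2 * σjj / 2) =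
      -(((n : ℝ) ^ 2 * σii + (m : ℝ) ^ 2 * σjj) / 2 : ℝ) := by
    push_cast; ring
  rw [hsplit, Complex.exp_add, ← hmarginal, Complex.exp_add]
  ring
end

section
/- The transformed covariance of sine under a centered bivariate Gaussian satisfies τ(sin, sin) = e^{−(σii+σjj)/2}·sinh σij; equivalently, since sin is odd so its transformed mean vanishes, ∫_{ℝ²} sin(x)·sin(w)·p(x,w) dx dw = e^{−(σii+σjj)/2}·sinh σij. -/
open MeasureTheory Real

/-!
Completing the square in the exponent factors the density as
`p(x, w) = φ_{σii}(x) · φ_s(w - a x)` with `a = σij / σii` and `s = d / σii`: given `x`, `w` is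
Gaussian with mean `a x` and variance `s`. The Gaussian characteristic function
`∫ e^{itx} φ_v(x - m) dx = e^{itm - v t² / 2}` then gives `∫ sin w φ_s(w - a x) dw = e^{-s/2} sin (a x)`,
and, after `sin x sin (a x) = (cos ((1 - a) x) - cos ((1 + a) x)) / 2`, the outer integral equals
`e^{-s/2} (e^{-σii (1-a)²/2} - e^{-σii (1+a)²/2}) / 2 = e^{-(σii+σjj)/2} sinh σij`.
The transformed means vanish because the characteristic function of a centered Gaussian is real.
-/

open ProbabilityTheory

section

open Complex

lemma integrable_cexp_mul_I {μ : Measure ℝ} [IsFiniteMeasure μ] (t : ℝ) :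
    Integrable (fun x : ℝ => cexp (t * x * I)) μ :=
  .of_bound (by fun_prop) 1 (ae_of_all _ fun x => by
    rw [← ofReal_mul, norm_exp_ofReal_mul_I])

lemma integral_cos_mul_eq_re_charFun {μ : Measure ℝ} [IsFiniteMeasure μ] (t : ℝ) :
    ∫ x, Real.cos (t * x) ∂μ = (charFun μ t).re := by
  have h := integral_re (integrable_cexp_mul_I (μ := μ) t)
  simp only [RCLike.re_to_complex, ← ofReal_mul, exp_ofReal_mul_I_re] at h
  rw [h, charFun_apply_real]
  simp only [ofReal_mul]

lemma integral_sin_mul_eq_im_charFun {μ : Measure ℝ} [IsFiniteMeasure μ] (t : ℝ) :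
    ∫ x, Real.sin (t * x) ∂μ = (charFun μ t).im := by
  have h := integral_im (integrable_cexp_mul_I (μ := μ) t)
  simp only [RCLike.im_to_complex, ← ofReal_mul, exp_ofReal_mul_I_im] at h
  rw [h, charFun_apply_real]
  simp only [ofReal_mul]

end

namespace ProbabilityTheory

open Complex in
lemma charFun_gaussianReal_eq (μ : ℝ) (v : NNReal) (t : ℝ) :
    charFun (gaussianReal μ v) t = (Real.exp (-(v * t ^ 2) / 2) : ℂ) * cexp ((t * μ : ℝ) * I) := by
  rw [charFun_gaussianReal, ofReal_exp, ← Complex.exp_add]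
  push_cast
  ring_nf

lemma integral_cos_mul_gaussianReal (μ : ℝ) (v : NNReal) (t : ℝ) :
    ∫ x, Real.cos (t * x) ∂gaussianReal μ v = Real.exp (-(v * t ^ 2) / 2) * Real.cos (t * μ) := by
  rw [integral_cos_mul_eq_re_charFun, charFun_gaussianReal_eq, Complex.re_ofReal_mul,
    Complex.exp_ofReal_mul_I_re]

lemma integral_sin_mul_gaussianReal (μ : ℝ) (v : NNReal) (t : ℝ) :
    ∫ x, Real.sin (t * x) ∂gaussianReal μ v = Real.exp (-(v * t ^ 2) / 2) * Real.sin (t * μ) := by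
  rw [integral_sin_mul_eq_im_charFun, charFun_gaussianReal_eq, Complex.im_ofReal_mul,
    Complex.exp_ofReal_mul_I_im]

end ProbabilityTheory

lemma gaussPDF1_sub_eq_gaussianPDFReal {v : ℝ} (hv : 0 ≤ v) (m x : ℝ) :
    gaussPDF1 v (x - m) = gaussianPDFReal m v.toNNReal x := by
  rw [gaussPDF1, gaussianPDFReal, Real.coe_toNNReal _ hv, one_div]

lemma integral_mul_gaussPDF1_sub {v : ℝ} (hv : 0 < v) (m : ℝ) (f : ℝ → ℝ) :
    ∫ x, f x * gaussPDF1 v (x - m) = ∫ x, f x ∂gaussianReal m v.toNNReal := by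
  rw [integral_gaussianReal_eq_integral_smul (by simpa using hv)]
  simp only [gaussPDF1_sub_eq_gaussianPDFReal hv.le, smul_eq_mul, mul_comm]

lemma transMean_eq_integral_gaussianReal {σ : ℝ} (hσ : 0 < σ) (f : ℝ → ℝ) :
    transMean σ f = ∫ x, f x ∂gaussianReal 0 σ.toNNReal := by
  simpa [transMean] using integral_mul_gaussPDF1_sub hσ 0 f

lemma integrable_gaussPDF1 {v : ℝ} (hv : 0 ≤ v) : Integrable (gaussPDF1 v) := by
  have h : gaussPDF1 v = gaussianPDFReal 0 v.toNNReal :=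
    funext fun x => by simpa using gaussPDF1_sub_eq_gaussianPDFReal hv 0 x
  exact h ▸ integrable_gaussianPDFReal 0 v.toNNReal

lemma continuous_gaussPDF1 (v : ℝ) : Continuous (gaussPDF1 v) := by
  unfold gaussPDF1; fun_prop

lemma transMean_sin {σ : ℝ} (hσ : 0 < σ) : transMean σ Real.sin = 0 := by
  rw [transMean_eq_integral_gaussianReal hσ]
  simpa using integral_sin_mul_gaussianReal 0 σ.toNNReal 1

lemma integral_sin_mul_gaussPDF1_sub {v : ℝ} (hv : 0 < v) (m : ℝ) :
    ∫ w, Real.sin w * gaussPDF1 v (w - m) = Real.exp (-v / 2) * Real.sin m := by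
  rw [integral_mul_gaussPDF1_sub hv]
  simpa [hv.le] using integral_sin_mul_gaussianReal m v.toNNReal 1

lemma integral_sin_mul_sin_mul_gaussianReal (v : NNReal) (a : ℝ) :
    ∫ x, Real.sin x * Real.sin (a * x) ∂gaussianReal 0 v =
      (Real.exp (-(v * (1 - a) ^ 2) / 2) - Real.exp (-(v * (1 + a) ^ 2) / 2)) / 2 := by
  have hcos : ∀ t : ℝ, Integrable (fun x => Real.cos (t * x)) (gaussianReal 0 v) := fun t =>
    .of_bound (by fun_prop) 1 (ae_of_all _ fun x => by simpa using Real.abs_cos_le_one _)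
  have hprod : ∀ x : ℝ, Real.sin x * Real.sin (a * x) =
      (Real.cos ((1 - a) * x) - Real.cos ((1 + a) * x)) / 2 := by
    intro x
    rw [sub_mul, add_mul, one_mul, Real.cos_sub, Real.cos_add]
    ring
  simp only [hprod]
  rw [integral_div, integral_sub (hcos _) (hcos _), integral_cos_mul_gaussianReal,
    integral_cos_mul_gaussianReal]
  simp

lemma integrable_mul_comp_sub_mul {f g : ℝ → ℝ} (hf : Integrable f) (hg : Integrable g)
    (hfc : Continuous f) (hgc : Continuous g) (a : ℝ) :
    Integrable (fun q : ℝ × ℝ => f q.1 * g (q.2 - a * q.1)) := by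
  rw [Measure.volume_eq_prod]
  refine (integrable_prod_iff (by fun_prop : Continuous _).aestronglyMeasurable).2
    ⟨ae_of_all _ fun x => (hg.comp_sub_right (a * x)).const_mul (f x), ?_⟩
  refine (hf.norm.mul_const (∫ w, ‖g w‖)).congr (ae_of_all _ fun x => ?_)
  simp only [norm_mul, integral_const_mul]
  rw [integral_sub_right_eq_self (fun w => ‖g w‖)]

lemma integrable_sin_mul_sin_mul_gaussPDF2 {σii σjj σij : ℝ} (hii : 0 < σii)
    (hd : 0 < σii * σjj - σij ^ 2) :
    Integrable (fun q : ℝ × ℝ => Real.sin q.1 * Real.sin q.2 * gaussPDF2 σii σjj σij q.1 q.2) := by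
  have hs : 0 < (σii * σjj - σij ^ 2) / σii := div_pos hd hii
  have hdensity := integrable_mul_comp_sub_mul (integrable_gaussPDF1 hii.le)
    (integrable_gaussPDF1 hs.le) (continuous_gaussPDF1 _) (continuous_gaussPDF1 _) (σij / σii)
  have hsin : Continuous fun q : ℝ × ℝ => Real.sin q.1 * Real.sin q.2 := by fun_prop
  refine (hdensity.bdd_mul (c := 1) hsin.aestronglyMeasurable (ae_of_all _ fun q => ?_)).congr
    (ae_of_all _ fun q => by simp only [gaussPDF2_eq_mul hii hd])
  simpa [abs_mul] using
    mul_le_one₀ (Real.abs_sin_le_one q.1) (abs_nonneg _) (Real.abs_sin_le_one q.2)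

lemma integral_sin_mul_sin_mul_gaussPDF2 {σii σjj σij : ℝ} (hii : 0 < σii)
    (hd : 0 < σii * σjj - σij ^ 2) :
    ∫ q : ℝ × ℝ, Real.sin q.1 * Real.sin q.2 * gaussPDF2 σii σjj σij q.1 q.2 =
      Real.exp (-(σii + σjj) / 2) * Real.sinh σij := by
  set s := (σii * σjj - σij ^ 2) / σii with hs_def
  set a := σij / σii with ha_def
  have hs : 0 < s := div_pos hd hii
  have hfactor : ∀ x w, Real.sin x * Real.sin w * gaussPDF2 σii σjj σij x w =
      Real.sin x * gaussPDF1 σii x * (Real.sin w * gaussPDF1 s (w - a * x)) := by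
    intro x w
    rw [gaussPDF2_eq_mul hii hd]
    ring
  have hplus : -s / 2 + -(σii * (1 - a) ^ 2) / 2 = -(σii + σjj) / 2 + σij := by
    rw [hs_def, ha_def]
    field_simp
    ring
  have hminus : -s / 2 + -(σii * (1 + a) ^ 2) / 2 = -(σii + σjj) / 2 + -σij := by
    rw [hs_def, ha_def]
    field_simp
    ring
  rw [Measure.volume_eq_prod, integral_prod _ (integrable_sin_mul_sin_mul_gaussPDF2 hii hd)]
  simp only [hfactor, integral_const_mul, integral_sin_mul_gaussPDF1_sub hs]
  calc ∫ x, Real.sin x * gaussPDF1 σii x * (Real.exp (-s / 2) * Real.sin (a * x))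
      = Real.exp (-s / 2) * ∫ x, Real.sin x * Real.sin (a * x) ∂gaussianReal 0 σii.toNNReal := by
        rw [← integral_mul_gaussPDF1_sub hii 0, ← integral_const_mul]
        simp only [sub_zero]
        congr 1 with x
        ring
    _ = Real.exp (-(σii + σjj) / 2) * Real.sinh σij := by
        rw [integral_sin_mul_sin_mul_gaussianReal, Real.coe_toNNReal _ hii.le, mul_div_assoc',
          mul_sub, ← Real.exp_add, ← Real.exp_add, hplus, hminus, Real.sinh_eq, Real.exp_add,
          Real.exp_add]
        ring

theorem transformed_covariance_sin
    (σii σjj σij : ℝ) (hii : 0 < σii) (hjj : 0 < σjj)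
    (hd : 0 < σii * σjj - σij ^ 2) :
    transCov σii σjj σij Real.sin Real.sin =
      Real.exp (-(σii + σjj) / 2) * Real.sinh σij ∧
    ∫ q : ℝ × ℝ, Real.sin q.1 * Real.sin q.2 * gaussPDF2 σii σjj σij q.1 q.2 =
      Real.exp (-(σii + σjj) / 2) * Real.sinh σij := by
  have hdouble := integral_sin_mul_sin_mul_gaussPDF2 hii hd
  refine ⟨?_, hdouble⟩
  rw [transCov, transMean_sin hii, transMean_sin hjj, hdouble, mul_zero, sub_zero]
end

section
/- Let a, b > 0 and define f₁(x) := (1/√(2π·a))·e^{−x²/(2a)} and f₂(x) := (1/√(2π·b))·e^{−x²/(2b)}. Then the transformed covariance satisfies τ(f₁,f₂) = (1/(2π))·( ((a+σii)·(b+σjj) − σij²)^{−1/2} − ((a+σii)·(b+σjj))^{−1/2} ). -/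
/-!
Both sides are Gaussian integrals. Multiplying the two test densities into the bivariate
density gives an unnormalised centred Gaussian whose precision matrix is
`Σ⁻¹ + diag(a⁻¹, b⁻¹)`, and `∫ exp (-(A x² + B x w + C w²)) = 2π / √(4AC - B²)` by completing
the square in `w`. Since `det (Σ⁻¹ + diag(a⁻¹, b⁻¹)) = det (Σ + diag(a, b)) / (a b det Σ)`, the
joint term is `(2π √det (Σ + diag(a, b)))⁻¹`. In the same way each transformed mean is
`(2π (a + σ))^(-1/2)`, the value at `0` of the convolution `φ_a ∗ φ_σ = φ_{a+σ}`.
-/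

open MeasureTheory Real

section QuadraticForm

variable {A B C : ℝ}

lemma neg_quadratic_form_eq_complete_square (hC : C ≠ 0) (x y : ℝ) :
    -(A * x ^ 2 + B * x * y + C * y ^ 2) =
      -(A - B ^ 2 / (4 * C)) * x ^ 2 + -C * (y + B * x / (2 * C)) ^ 2 := by
  field_simp
  ring

lemma integrable_exp_neg_quadratic_form_slice (hC : 0 < C) (x : ℝ) :
    Integrable fun y => exp (-(A * x ^ 2 + B * x * y + C * y ^ 2)) := by
  simp_rw [neg_quadratic_form_eq_complete_square hC.ne', exp_add]
  exact ((integrable_exp_neg_mul_sq hC).comp_add_right _).const_mul _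

lemma integral_exp_neg_quadratic_form_slice (hC : 0 < C) (x : ℝ) :
    ∫ y, exp (-(A * x ^ 2 + B * x * y + C * y ^ 2)) =
      √(π / C) * exp (-(A - B ^ 2 / (4 * C)) * x ^ 2) := by
  simp_rw [neg_quadratic_form_eq_complete_square hC.ne', exp_add, integral_const_mul,
    integral_add_right_eq_self (fun y => exp (-C * y ^ 2)), integral_gaussian, mul_comm]

lemma sub_sq_div_four_mul_pos (hC : 0 < C) (hdisc : B ^ 2 < 4 * A * C) :
    0 < A - B ^ 2 / (4 * C) := by
  rw [sub_pos, div_lt_iff₀ (by positivity)]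
  linarith

lemma integrable_exp_neg_quadratic_form (hC : 0 < C) (hdisc : B ^ 2 < 4 * A * C) :
    Integrable fun q : ℝ × ℝ => exp (-(A * q.1 ^ 2 + B * q.1 * q.2 + C * q.2 ^ 2)) := by
  rw [Measure.volume_eq_prod, integrable_prod_iff (by fun_prop)]
  refine ⟨ae_of_all _ (integrable_exp_neg_quadratic_form_slice hC), ?_⟩
  simp_rw [norm_of_nonneg (exp_nonneg _), integral_exp_neg_quadratic_form_slice hC]
  exact (integrable_exp_neg_mul_sq (sub_sq_div_four_mul_pos hC hdisc)).const_mul _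

lemma integral_exp_neg_quadratic_form (hC : 0 < C) (hdisc : B ^ 2 < 4 * A * C) :
    ∫ q : ℝ × ℝ, exp (-(A * q.1 ^ 2 + B * q.1 * q.2 + C * q.2 ^ 2)) =
      2 * π / √(4 * A * C - B ^ 2) := by
  rw [Measure.volume_eq_prod, integral_prod _ (integrable_exp_neg_quadratic_form hC hdisc)]
  simp_rw [integral_exp_neg_quadratic_form_slice hC, integral_const_mul, integral_gaussian]
  have hE := sub_sq_div_four_mul_pos hC hdisc
  have hdisc' : 0 < 4 * A * C - B ^ 2 := by linarith
  rw [← sq_eq_sq₀ (by positivity) (by positivity)]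
  simp (disch := positivity) only [mul_pow, div_pow, sq_sqrt]
  field_simp
  ring

end QuadraticForm

lemma transMean_gaussPDF1 {a σ : ℝ} (ha : 0 < a) (hσ : 0 < σ) :
    transMean σ (gaussPDF1 a) = (√(2 * π * (a + σ)))⁻¹ := by
  have hprod (x : ℝ) : gaussPDF1 a x * gaussPDF1 σ x =
      (√(2 * π * a))⁻¹ * (√(2 * π * σ))⁻¹ * exp (-((a + σ) / (2 * a * σ)) * x ^ 2) := by
    rw [gaussPDF1, gaussPDF1, mul_mul_mul_comm, ← exp_add, one_div, one_div]
    congr 2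
    field_simp
    ring
  simp_rw [transMean, hprod, integral_const_mul, integral_gaussian]
  rw [← sq_eq_sq₀ (by positivity) (by positivity)]
  simp (disch := positivity) only [mul_pow, inv_pow, sq_sqrt]
  field_simp

lemma add_mul_add_sub_sq_pos {σii σjj σij a b : ℝ} (hii : 0 < σii) (hjj : 0 < σjj)
    (hd : 0 < σii * σjj - σij ^ 2) (ha : 0 < a) (hb : 0 < b) :
    0 < (a + σii) * (b + σjj) - σij ^ 2 := by
  nlinarith [mul_pos ha hb, mul_pos ha hjj, mul_pos hb hii]

lemma integral_gaussPDF1_mul_gaussPDF1_mul_gaussPDF2 {σii σjj σij a b : ℝ} (hii : 0 < σii)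
    (hjj : 0 < σjj) (hd : 0 < σii * σjj - σij ^ 2) (ha : 0 < a) (hb : 0 < b) :
    ∫ q : ℝ × ℝ, gaussPDF1 a q.1 * gaussPDF1 b q.2 * gaussPDF2 σii σjj σij q.1 q.2 =
      (2 * π * √((a + σii) * (b + σjj) - σij ^ 2))⁻¹ := by
  set d := σii * σjj - σij ^ 2 with hd_def
  set A := 1 / (2 * a) + σjj / (2 * d) with hA_def
  set B := -σij / d with hB_def
  set C := 1 / (2 * b) + σii / (2 * d) with hC_def
  have hprod (x w : ℝ) : gaussPDF1 a x * gaussPDF1 b w * gaussPDF2 σii σjj σij x w =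
      (√(2 * π * a))⁻¹ * (√(2 * π * b))⁻¹ * (2 * π * √d)⁻¹ *
        exp (-(A * x ^ 2 + B * x * w + C * w ^ 2)) := by
    have hexp : -x ^ 2 / (2 * a) + -w ^ 2 / (2 * b) +
        -(σjj * x ^ 2 - 2 * σij * x * w + σii * w ^ 2) / (2 * d) =
        -(A * x ^ 2 + B * x * w + C * w ^ 2) := by
      rw [hA_def, hB_def, hC_def]
      field_simp
      ring
    rw [gaussPDF1, gaussPDF1, gaussPDF2, ← hd_def, ← hexp, exp_add, exp_add]
    ring
  have hdisc : 4 * A * C - B ^ 2 = ((a + σii) * (b + σjj) - σij ^ 2) / (a * b * d) := by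
    rw [hA_def, hB_def, hC_def]
    field_simp
    rw [hd_def]
    ring
  have hD := add_mul_add_sub_sq_pos hii hjj hd ha hb
  have hC : 0 < C := by positivity
  have hAC : B ^ 2 < 4 * A * C := by
    rw [← sub_pos, hdisc]
    positivity
  simp_rw [hprod, integral_const_mul, integral_exp_neg_quadratic_form hC hAC, hdisc]
  rw [← sq_eq_sq₀ (by positivity) (by positivity)]
  simp (disch := positivity) only [mul_pow, div_pow, inv_pow, sq_sqrt]
  field_simp

theorem transformed_covariance_gaussian
    (σii σjj σij : ℝ) (hii : 0 < σii) (hjj : 0 < σjj)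
    (hd : 0 < σii * σjj - σij ^ 2) (a b : ℝ) (ha : 0 < a) (hb : 0 < b) :
    transCov σii σjj σij
        (fun x => (1 / Real.sqrt (2 * π * a)) * Real.exp (-x ^ 2 / (2 * a)))
        (fun x => (1 / Real.sqrt (2 * π * b)) * Real.exp (-x ^ 2 / (2 * b))) =
      (1 / (2 * π)) * (((a + σii) * (b + σjj) - σij ^ 2) ^ (-(1 / 2) : ℝ) -
        ((a + σii) * (b + σjj)) ^ (-(1 / 2) : ℝ)) := by
  have hD := add_mul_add_sub_sq_pos hii hjj hd ha hb
  have hP : 0 < (a + σii) * (b + σjj) := by positivity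
  have hmeans : (√(2 * π * (a + σii)))⁻¹ * (√(2 * π * (b + σjj)))⁻¹ =
      (2 * π * √((a + σii) * (b + σjj)))⁻¹ := by
    rw [← sq_eq_sq₀ (by positivity) (by positivity)]
    simp (disch := positivity) only [mul_pow, inv_pow, sq_sqrt]
    rw [← mul_inv]
    ring
  change transCov σii σjj σij (gaussPDF1 a) (gaussPDF1 b) = _
  rw [transCov, integral_gaussPDF1_mul_gaussPDF1_mul_gaussPDF2 hii hjj hd ha hb,
    transMean_gaussPDF1 ha hii, transMean_gaussPDF1 hb hjj, hmeans, rpow_neg hD.le,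
    rpow_neg hP.le, ← sqrt_eq_rpow, ← sqrt_eq_rpow]
  ring
end
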